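/- arXiv:1201.0529 — 3 statements merged into one kernel-verified Lean document; each statement's English description precedes it below -/
import Mathlib

section
/- There exists an acyclic system of permutations of {1, …, 5} on the complete graph K_4 that is not induced by any triangulation (without extra vertices) of Δ_4 × Δ_3. In other words, the Acyclic System Conjecture of Ardila and Ceballos fails for Δ_4 × Δ_3. -/
open Finset

/-- The vertex `(e_i, f_a)` of the product of simplices `Δ_{n-1} × Δ_{d-1} ⊆ ℝ^n × ℝ^d`. -/
def vert (n d : ℕ) (i : Fin n) (a : Fin d) : (Fin n → ℝ) × (Fin d → ℝ) :=
  (Pi.single i 1, Pi.single a 1)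

/-- The product of simplices `Δ_{n-1} × Δ_{d-1}`, the convex hull of the `n·d`
points `(e_i, f_a)`. -/
def prodSimplex (n d : ℕ) : Set ((Fin n → ℝ) × (Fin d → ℝ)) :=
  convexHull ℝ {p | ∃ i a, p = vert n d i a}

/-- `T` is a triangulation (without extra vertices) of the polytope `P`:
a geometric simplicial complex all of whose vertices are among the points `(e_i, f_a)`
and whose underlying space is `P`. -/
def IsTriangulationOf (n d : ℕ)
    (T : Geometry.SimplicialComplex ℝ ((Fin n → ℝ) × (Fin d → ℝ)))
    (P : Set ((Fin n → ℝ) × (Fin d → ℝ))) : Prop :=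
  (∀ x ∈ T.vertices, ∃ i a, x = vert n d i a) ∧ T.space = P

/-- A system of permutations of `{1,…,n}` on the complete graph `K_d`: a strict linear
order `≺_{ab}` on `Fin n` for each ordered pair `(a, b)` of distinct elements of `Fin d`,
such that `≺_{ba}` is the reverse of `≺_{ab}`. -/
structure PermSystem (n d : ℕ) where
  prec : Fin d → Fin d → Fin n → Fin n → Prop
  trans : ∀ a b : Fin d, a ≠ b → ∀ i j k : Fin n, prec a b i j → prec a b j k → prec a b i k
  irrefl : ∀ a b : Fin d, a ≠ b → ∀ i : Fin n, ¬ prec a b i i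
  total : ∀ a b : Fin d, a ≠ b → ∀ i j : Fin n, i ≠ j → prec a b i j ∨ prec a b j i
  rev : ∀ a b : Fin d, a ≠ b → ∀ i j : Fin n, prec b a i j ↔ prec a b j i

/-- The tournament on `Fin d` associated to the pair of symbols `(i, j)`:
the arc `a → b` is present whenever `a ≠ b` and `i ≺_{ab} j`. -/
def PermSystem.tournament {n d : ℕ} (σ : PermSystem n d) (i j : Fin n) (a b : Fin d) : Prop :=
  a ≠ b ∧ σ.prec a b i j

/-- A system of permutations is acyclic if, for every pair of distinct symbols `i, j`,
the associated tournament has no directed cycle. -/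
def PermSystem.Acyclic {n d : ℕ} (σ : PermSystem n d) : Prop :=
  ∀ i j : Fin n, i ≠ j → ∀ a : Fin d, ¬ Relation.TransGen (σ.tournament i j) a a

/-- The triangulation (or simplicial complex) `T` induces the system of permutations `σ`:
`i ≺_{ab} j` iff the segment `{(e_i, f_a), (e_j, f_b)}` is a face of `T`. -/
def Induces {n d : ℕ} (T : Geometry.SimplicialComplex ℝ ((Fin n → ℝ) × (Fin d → ℝ)))
    (σ : PermSystem n d) : Prop :=
  ∀ i j : Fin n, i ≠ j → ∀ a b : Fin d, a ≠ b →
    (σ.prec a b i j ↔ ({vert n d i a, vert n d j b} : Finset _) ∈ T.faces)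

/-- A family `v_1, …, v_n` of vectors in `ℕ^d` is spread-out if for every nonempty
subset `J` of size `k` one has `∑_a min_{j ∈ J} (v_j)_a ≤ n - k`. -/
def SpreadOut (n d : ℕ) (v : Fin n → Fin d → ℕ) : Prop :=
  ∀ (J : Finset (Fin n)) (hJ : J.Nonempty),
    ∑ a : Fin d, J.inf' hJ (fun j => v j a) ≤ n - J.card

/-- The triangulation `T` of `Δ_{n-1} × Δ_{d-1}` realizes the positions `v_1, …, v_n ∈ ℕ^d`:
for every `i` there is a face `B` (encoded as a subset `S` of `[n] × [d]`) with `n + d - 1`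
vertices such that `B_i = {1, …, d}` and `(v_i)_a = #{j ≠ i : B_j = {a}}` for every `a`. -/
def Realizes (n d : ℕ) (T : Geometry.SimplicialComplex ℝ ((Fin n → ℝ) × (Fin d → ℝ)))
    (v : Fin n → Fin d → ℕ) : Prop :=
  ∀ i : Fin n, ∃ S : Finset (Fin n × Fin d),
    S.image (fun p => vert n d p.1 p.2) ∈ T.faces ∧
    S.card = n + d - 1 ∧
    (∀ a : Fin d, (i, a) ∈ S) ∧
    ∀ a : Fin d,
      v i a = (univ.filter fun j : Fin n => j ≠ i ∧ ∀ b : Fin d, ((j, b) ∈ S ↔ b = a)).card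

/-- A family of positions is realizable if some triangulation of `Δ_{n-1} × Δ_{d-1}`
realizes it. -/
def Realizable (n d : ℕ) (v : Fin n → Fin d → ℕ) : Prop :=
  ∃ T : Geometry.SimplicialComplex ℝ ((Fin n → ℝ) × (Fin d → ℝ)),
    IsTriangulationOf n d T (prodSimplex n d) ∧ Realizes n d T v


/-! ### Auxiliary machinery for the counterexample -/

lemma vert_eq_iff' {i j : Fin 5} {a b : Fin 4} :
    vert 5 4 i a = vert 5 4 j b ↔ i = j ∧ a = b := by
  constructor
  · intro h
    have h1 := congrFun (congrArg Prod.fst h) i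
    have h2 := congrFun (congrArg Prod.snd h) a
    constructor
    · by_contra hne
      simp [vert, Pi.single_apply, hne] at h1
    · by_contra hne
      simp [vert, Pi.single_apply, hne] at h2
  · rintro ⟨rfl, rfl⟩; rfl

/-- rank tables defining the counterexample system -/
def rkT : Fin 4 → Fin 4 → Fin 5 → ℕ :=
![
  ![![0,0,0,0,0], ![3, 1, 0, 4, 2], ![2, 0, 3, 4, 1], ![4, 2, 1, 3, 0]],
  ![![1, 3, 4, 0, 2], ![0,0,0,0,0], ![2, 0, 4, 1, 3], ![3, 1, 4, 2, 0]],
  ![![2, 4, 1, 0, 3], ![2, 4, 0, 3, 1], ![0,0,0,0,0], ![3, 4, 2, 1, 0]],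
  ![![0, 2, 3, 1, 4], ![1, 3, 0, 2, 4], ![1, 0, 2, 3, 4], ![0,0,0,0,0]]]

/-- rank tables for the tournaments (certifying acyclicity) -/
def rkC : Fin 5 → Fin 5 → Fin 4 → ℕ :=
![
  ![![0,0,0,0], ![3, 2, 0, 1], ![2, 0, 3, 1], ![1, 3, 2, 0], ![3, 1, 2, 0]],
  ![![0, 1, 3, 2], ![0,0,0,0], ![2, 0, 3, 1], ![0, 1, 3, 2], ![1, 2, 3, 0]],
  ![![1, 3, 0, 2], ![1, 3, 0, 2], ![0,0,0,0], ![0, 3, 2, 1], ![2, 3, 1, 0]],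
  ![![2, 0, 1, 3], ![3, 2, 0, 1], ![3, 0, 1, 2], ![0,0,0,0], ![3, 1, 2, 0]],
  ![![0, 2, 1, 3], ![2, 1, 0, 3], ![1, 0, 2, 3], ![0, 2, 1, 3], ![0,0,0,0]]]

/-- The counterexample system of permutations. -/
def mySigma : PermSystem 5 4 where
  prec a b i j := rkT a b i < rkT a b j
  trans := by decide
  irrefl := by decide
  total := by decide
  rev := by decide

theorem key_mono : ∀ i j : Fin 5, ∀ x y : Fin 4,
    x ≠ y → rkT x y i < rkT x y j → rkC i j x < rkC i j y := by decide

theorem mySigma_acyclic : mySigma.Acyclic := by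
  intro i j hij a h
  have key : ∀ x y : Fin 4, mySigma.tournament i j x y → rkC i j x < rkC i j y :=
    fun x y ht => key_mono i j x y ht.1 ht.2
  have mono : ∀ x y : Fin 4, Relation.TransGen (mySigma.tournament i j) x y →
      rkC i j x < rkC i j y := by
    intro x y h
    induction h with
    | single h => exact key _ _ h
    | tail _ h2 ih => exact ih.trans (key _ _ h2)
  exact lt_irrefl _ (mono a a h)

/-- The witness point not covered by any `mySigma`-compatible simplex. -/
noncomputable def pR : Fin 5 → ℝ := ![21/127, 38/127, 26/127, 22/127, 20/127]
noncomputable def pC : Fin 4 → ℝ := ![33/127, 28/127, 23/127, 43/127]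
noncomputable def pPt : (Fin 5 → ℝ) × (Fin 4 → ℝ) := (pR, pC)

lemma pPt_mem : pPt ∈ prodSimplex 5 4 := by
  have hmem : ∀ q : Fin 5 × Fin 4, (vert 5 4 q.1 q.2) ∈ {p | ∃ i a, p = vert 5 4 i a} :=
    fun q => ⟨q.1, q.2, rfl⟩
  have h := Finset.centerMass_mem_convexHull (Finset.univ : Finset (Fin 5 × Fin 4))
    (w := fun q => pR q.1 * pC q.2) (z := fun q => vert 5 4 q.1 q.2)
    (by intro q _; fin_cases q <;> norm_num [pR, pC])
    (by norm_num [Fintype.sum_prod_type, Fin.sum_univ_succ, pR, pC])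
    (fun q _ => hmem q)
  have hsum : ∑ q : Fin 5 × Fin 4, pR q.1 * pC q.2 = 1 := by
    norm_num [Fintype.sum_prod_type, Fin.sum_univ_succ, pR, pC]
  rw [Finset.centerMass_eq_of_sum_1 _ _ hsum] at h
  have heq : ∑ q : Fin 5 × Fin 4, (pR q.1 * pC q.2) • vert 5 4 q.1 q.2 = pPt := by
    apply Prod.ext
    · funext i
      rw [Prod.fst_sum, Finset.sum_apply]
      fin_cases i <;>
        norm_num [Fintype.sum_prod_type, Fin.sum_univ_succ, pR, pC, pPt, vert, Pi.single_apply]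
    · funext a
      rw [Prod.snd_sum, Finset.sum_apply]
      fin_cases a <;>
        norm_num [Fintype.sum_prod_type, Fin.sum_univ_succ, pR, pC, pPt, vert, Pi.single_apply]
  rwa [heq] at h

lemma row_marg (F : Finset ((Fin 5 → ℝ) × (Fin 4 → ℝ))) (w : ((Fin 5 → ℝ) × (Fin 4 → ℝ)) → ℝ)
    (hFv : ∀ x ∈ F, ∃ i a, x = vert 5 4 i a) (i : Fin 5) :
    ∑ a : Fin 4, ∑ x ∈ F.filter (fun y => y = vert 5 4 i a), w x
      = ∑ x ∈ F, w x * x.1 i := by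
  have key : ∀ x ∈ F, (∑ a : Fin 4, if x = vert 5 4 i a then w x else 0) = w x * x.1 i := by
    intro x hx
    obtain ⟨j, b, rfl⟩ := hFv x hx
    by_cases hji : j = i
    · subst hji
      have hcond : ∀ a : Fin 4, (vert 5 4 j b = vert 5 4 j a) ↔ (a = b) := by
        intro a
        rw [vert_eq_iff']
        constructor
        · rintro ⟨-, rfl⟩; rfl
        · rintro rfl; exact ⟨rfl, rfl⟩
      simp only [hcond]
      rw [Finset.sum_ite_eq' Finset.univ b (fun _ => w (vert 5 4 j b))]
      simp [vert, Pi.single_eq_same]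
    · have hcond : ∀ a : Fin 4, ¬ (vert 5 4 j b = vert 5 4 i a) := by
        intro a h
        exact hji (vert_eq_iff'.1 h).1
      simp only [hcond, if_false]
      simp [vert, Pi.single_eq_of_ne (Ne.symm hji)]
  simp only [Finset.sum_filter]
  rw [Finset.sum_comm]
  exact Finset.sum_congr rfl key

lemma col_marg (F : Finset ((Fin 5 → ℝ) × (Fin 4 → ℝ))) (w : ((Fin 5 → ℝ) × (Fin 4 → ℝ)) → ℝ)
    (hFv : ∀ x ∈ F, ∃ i a, x = vert 5 4 i a) (a : Fin 4) :
    ∑ i : Fin 5, ∑ x ∈ F.filter (fun y => y = vert 5 4 i a), w x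
      = ∑ x ∈ F, w x * x.2 a := by
  have key : ∀ x ∈ F, (∑ i : Fin 5, if x = vert 5 4 i a then w x else 0) = w x * x.2 a := by
    intro x hx
    obtain ⟨j, b, rfl⟩ := hFv x hx
    by_cases hba : b = a
    · subst hba
      have hcond : ∀ i : Fin 5, (vert 5 4 j b = vert 5 4 i b) ↔ (i = j) := by
        intro i
        rw [vert_eq_iff']
        constructor
        · rintro ⟨rfl, -⟩; rfl
        · rintro rfl; exact ⟨rfl, rfl⟩
      simp only [hcond]
      rw [Finset.sum_ite_eq' Finset.univ j (fun _ => w (vert 5 4 j b))]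
      simp [vert, Pi.single_eq_same]
    · have hcond : ∀ i : Fin 5, ¬ (vert 5 4 j b = vert 5 4 i a) := by
        intro i h
        exact hba (vert_eq_iff'.1 h).2
      simp only [hcond, if_false]
      simp [vert, Pi.single_eq_of_ne (Ne.symm hba)]
  simp only [Finset.sum_filter]
  rw [Finset.sum_comm]
  exact Finset.sum_congr rfl key

/-- The purely arithmetic/combinatorial core: no nonnegative weights with the marginals of
`pPt` can be supported on a `mySigma`-compatible set of cells. -/
theorem arith_contra (W : Fin 5 → Fin 4 → ℝ)
    (hWnn : ∀ (i : Fin 5) (a : Fin 4), 0 ≤ W i a)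
    (hgood : ∀ (i j : Fin 5) (a b : Fin 4), i ≠ j → a ≠ b →
      0 < W i a → 0 < W j b → mySigma.prec a b i j)
    (er0 : W 0 0 + W 0 1 + W 0 2 + W 0 3 = 21/127)
    (er1 : W 1 0 + W 1 1 + W 1 2 + W 1 3 = 38/127)
    (er2 : W 2 0 + W 2 1 + W 2 2 + W 2 3 = 26/127)
    (er3 : W 3 0 + W 3 1 + W 3 2 + W 3 3 = 22/127)
    (er4 : W 4 0 + W 4 1 + W 4 2 + W 4 3 = 20/127)
    (ec0 : W 0 0 + W 1 0 + W 2 0 + W 3 0 + W 4 0 = 33/127)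
    (ec1 : W 0 1 + W 1 1 + W 2 1 + W 3 1 + W 4 1 = 28/127)
    (ec2 : W 0 2 + W 1 2 + W 2 2 + W 3 2 + W 4 2 = 23/127)
    (ec3 : W 0 3 + W 1 3 + W 2 3 + W 3 3 + W 4 3 = 43/127) : False := by
  rcases lt_or_eq_of_le (hWnn 1 2) with hp_1_2 | hz_1_2
  · -- W 1 2 > 0
    rcases lt_or_eq_of_le (hWnn 0 0) with hp_0_0 | hz_0_0
    · exact absurd (hgood 1 0 2 0 (by decide) (by decide) hp_1_2 hp_0_0) (by show ¬(rkT 2 0 1 < rkT 2 0 0); decide)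
    rcases lt_or_eq_of_le (hWnn 0 1) with hp_0_1 | hz_0_1
    · exact absurd (hgood 1 0 2 1 (by decide) (by decide) hp_1_2 hp_0_1) (by show ¬(rkT 2 1 1 < rkT 2 1 0); decide)
    rcases lt_or_eq_of_le (hWnn 0 3) with hp_0_3 | hz_0_3
    · exact absurd (hgood 1 0 2 3 (by decide) (by decide) hp_1_2 hp_0_3) (by show ¬(rkT 2 3 1 < rkT 2 3 0); decide)
    rcases lt_or_eq_of_le (hWnn 2 0) with hp_2_0 | hz_2_0
    · exact absurd (hgood 1 2 2 0 (by decide) (by decide) hp_1_2 hp_2_0) (by show ¬(rkT 2 0 1 < rkT 2 0 2); decide)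
    rcases lt_or_eq_of_le (hWnn 2 1) with hp_2_1 | hz_2_1
    · exact absurd (hgood 1 2 2 1 (by decide) (by decide) hp_1_2 hp_2_1) (by show ¬(rkT 2 1 1 < rkT 2 1 2); decide)
    rcases lt_or_eq_of_le (hWnn 2 3) with hp_2_3 | hz_2_3
    · exact absurd (hgood 1 2 2 3 (by decide) (by decide) hp_1_2 hp_2_3) (by show ¬(rkT 2 3 1 < rkT 2 3 2); decide)
    rcases lt_or_eq_of_le (hWnn 3 0) with hp_3_0 | hz_3_0
    · exact absurd (hgood 1 3 2 0 (by decide) (by decide) hp_1_2 hp_3_0) (by show ¬(rkT 2 0 1 < rkT 2 0 3); decide)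
    rcases lt_or_eq_of_le (hWnn 3 1) with hp_3_1 | hz_3_1
    · exact absurd (hgood 1 3 2 1 (by decide) (by decide) hp_1_2 hp_3_1) (by show ¬(rkT 2 1 1 < rkT 2 1 3); decide)
    rcases lt_or_eq_of_le (hWnn 3 3) with hp_3_3 | hz_3_3
    · exact absurd (hgood 1 3 2 3 (by decide) (by decide) hp_1_2 hp_3_3) (by show ¬(rkT 2 3 1 < rkT 2 3 3); decide)
    rcases lt_or_eq_of_le (hWnn 4 0) with hp_4_0 | hz_4_0
    · exact absurd (hgood 1 4 2 0 (by decide) (by decide) hp_1_2 hp_4_0) (by show ¬(rkT 2 0 1 < rkT 2 0 4); decide)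
    rcases lt_or_eq_of_le (hWnn 4 1) with hp_4_1 | hz_4_1
    · exact absurd (hgood 1 4 2 1 (by decide) (by decide) hp_1_2 hp_4_1) (by show ¬(rkT 2 1 1 < rkT 2 1 4); decide)
    rcases lt_or_eq_of_le (hWnn 4 3) with hp_4_3 | hz_4_3
    · exact absurd (hgood 1 4 2 3 (by decide) (by decide) hp_1_2 hp_4_3) (by show ¬(rkT 2 3 1 < rkT 2 3 4); decide)
    linarith [hWnn 0 0, hWnn 0 1, hWnn 0 2, hWnn 0 3, hWnn 1 0, hWnn 1 1, hWnn 1 2, hWnn 1 3, hWnn 2 0, hWnn 2 1, hWnn 2 2, hWnn 2 3, hWnn 3 0, hWnn 3 1, hWnn 3 2, hWnn 3 3, hWnn 4 0, hWnn 4 1, hWnn 4 2, hWnn 4 3]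
  · -- W 1 2 = 0
    rcases lt_or_eq_of_le (hWnn 2 1) with hp_2_1 | hz_2_1
    · -- W 2 1 > 0
      rcases lt_or_eq_of_le (hWnn 0 0) with hp_0_0 | hz_0_0
      · exact absurd (hgood 2 0 1 0 (by decide) (by decide) hp_2_1 hp_0_0) (by show ¬(rkT 1 0 2 < rkT 1 0 0); decide)
      rcases lt_or_eq_of_le (hWnn 0 2) with hp_0_2 | hz_0_2
      · exact absurd (hgood 2 0 1 2 (by decide) (by decide) hp_2_1 hp_0_2) (by show ¬(rkT 1 2 2 < rkT 1 2 0); decide)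
      rcases lt_or_eq_of_le (hWnn 0 3) with hp_0_3 | hz_0_3
      · exact absurd (hgood 2 0 1 3 (by decide) (by decide) hp_2_1 hp_0_3) (by show ¬(rkT 1 3 2 < rkT 1 3 0); decide)
      rcases lt_or_eq_of_le (hWnn 1 0) with hp_1_0 | hz_1_0
      · exact absurd (hgood 2 1 1 0 (by decide) (by decide) hp_2_1 hp_1_0) (by show ¬(rkT 1 0 2 < rkT 1 0 1); decide)
      rcases lt_or_eq_of_le (hWnn 1 3) with hp_1_3 | hz_1_3
      · exact absurd (hgood 2 1 1 3 (by decide) (by decide) hp_2_1 hp_1_3) (by show ¬(rkT 1 3 2 < rkT 1 3 1); decide)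
      rcases lt_or_eq_of_le (hWnn 3 0) with hp_3_0 | hz_3_0
      · exact absurd (hgood 2 3 1 0 (by decide) (by decide) hp_2_1 hp_3_0) (by show ¬(rkT 1 0 2 < rkT 1 0 3); decide)
      rcases lt_or_eq_of_le (hWnn 3 2) with hp_3_2 | hz_3_2
      · exact absurd (hgood 2 3 1 2 (by decide) (by decide) hp_2_1 hp_3_2) (by show ¬(rkT 1 2 2 < rkT 1 2 3); decide)
      rcases lt_or_eq_of_le (hWnn 3 3) with hp_3_3 | hz_3_3
      · exact absurd (hgood 2 3 1 3 (by decide) (by decide) hp_2_1 hp_3_3) (by show ¬(rkT 1 3 2 < rkT 1 3 3); decide)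
      rcases lt_or_eq_of_le (hWnn 4 0) with hp_4_0 | hz_4_0
      · exact absurd (hgood 2 4 1 0 (by decide) (by decide) hp_2_1 hp_4_0) (by show ¬(rkT 1 0 2 < rkT 1 0 4); decide)
      rcases lt_or_eq_of_le (hWnn 4 2) with hp_4_2 | hz_4_2
      · exact absurd (hgood 2 4 1 2 (by decide) (by decide) hp_2_1 hp_4_2) (by show ¬(rkT 1 2 2 < rkT 1 2 4); decide)
      rcases lt_or_eq_of_le (hWnn 4 3) with hp_4_3 | hz_4_3
      · exact absurd (hgood 2 4 1 3 (by decide) (by decide) hp_2_1 hp_4_3) (by show ¬(rkT 1 3 2 < rkT 1 3 4); decide)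
      linarith [hWnn 0 0, hWnn 0 1, hWnn 0 2, hWnn 0 3, hWnn 1 0, hWnn 1 1, hWnn 1 2, hWnn 1 3, hWnn 2 0, hWnn 2 1, hWnn 2 2, hWnn 2 3, hWnn 3 0, hWnn 3 1, hWnn 3 2, hWnn 3 3, hWnn 4 0, hWnn 4 1, hWnn 4 2, hWnn 4 3]
    · -- W 2 1 = 0
      rcases lt_or_eq_of_le (hWnn 4 3) with hp_4_3 | hz_4_3
      · -- W 4 3 > 0
        rcases lt_or_eq_of_le (hWnn 0 0) with hp_0_0 | hz_0_0
        · exact absurd (hgood 4 0 3 0 (by decide) (by decide) hp_4_3 hp_0_0) (by show ¬(rkT 3 0 4 < rkT 3 0 0); decide)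
        rcases lt_or_eq_of_le (hWnn 0 1) with hp_0_1 | hz_0_1
        · exact absurd (hgood 4 0 3 1 (by decide) (by decide) hp_4_3 hp_0_1) (by show ¬(rkT 3 1 4 < rkT 3 1 0); decide)
        rcases lt_or_eq_of_le (hWnn 0 2) with hp_0_2 | hz_0_2
        · exact absurd (hgood 4 0 3 2 (by decide) (by decide) hp_4_3 hp_0_2) (by show ¬(rkT 3 2 4 < rkT 3 2 0); decide)
        rcases lt_or_eq_of_le (hWnn 1 0) with hp_1_0 | hz_1_0
        · exact absurd (hgood 4 1 3 0 (by decide) (by decide) hp_4_3 hp_1_0) (by show ¬(rkT 3 0 4 < rkT 3 0 1); decide)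
        rcases lt_or_eq_of_le (hWnn 1 1) with hp_1_1 | hz_1_1
        · exact absurd (hgood 4 1 3 1 (by decide) (by decide) hp_4_3 hp_1_1) (by show ¬(rkT 3 1 4 < rkT 3 1 1); decide)
        rcases lt_or_eq_of_le (hWnn 2 0) with hp_2_0 | hz_2_0
        · exact absurd (hgood 4 2 3 0 (by decide) (by decide) hp_4_3 hp_2_0) (by show ¬(rkT 3 0 4 < rkT 3 0 2); decide)
        rcases lt_or_eq_of_le (hWnn 2 2) with hp_2_2 | hz_2_2
        · exact absurd (hgood 4 2 3 2 (by decide) (by decide) hp_4_3 hp_2_2) (by show ¬(rkT 3 2 4 < rkT 3 2 2); decide)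
        rcases lt_or_eq_of_le (hWnn 3 0) with hp_3_0 | hz_3_0
        · exact absurd (hgood 4 3 3 0 (by decide) (by decide) hp_4_3 hp_3_0) (by show ¬(rkT 3 0 4 < rkT 3 0 3); decide)
        rcases lt_or_eq_of_le (hWnn 3 1) with hp_3_1 | hz_3_1
        · exact absurd (hgood 4 3 3 1 (by decide) (by decide) hp_4_3 hp_3_1) (by show ¬(rkT 3 1 4 < rkT 3 1 3); decide)
        rcases lt_or_eq_of_le (hWnn 3 2) with hp_3_2 | hz_3_2
        · exact absurd (hgood 4 3 3 2 (by decide) (by decide) hp_4_3 hp_3_2) (by show ¬(rkT 3 2 4 < rkT 3 2 3); decide)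
        linarith [hWnn 0 0, hWnn 0 1, hWnn 0 2, hWnn 0 3, hWnn 1 0, hWnn 1 1, hWnn 1 2, hWnn 1 3, hWnn 2 0, hWnn 2 1, hWnn 2 2, hWnn 2 3, hWnn 3 0, hWnn 3 1, hWnn 3 2, hWnn 3 3, hWnn 4 0, hWnn 4 1, hWnn 4 2, hWnn 4 3]
      · -- W 4 3 = 0
        rcases lt_or_eq_of_le (hWnn 3 0) with hp_3_0 | hz_3_0
        · -- W 3 0 > 0
          rcases lt_or_eq_of_le (hWnn 0 1) with hp_0_1 | hz_0_1
          · exact absurd (hgood 3 0 0 1 (by decide) (by decide) hp_3_0 hp_0_1) (by show ¬(rkT 0 1 3 < rkT 0 1 0); decide)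
          rcases lt_or_eq_of_le (hWnn 0 2) with hp_0_2 | hz_0_2
          · exact absurd (hgood 3 0 0 2 (by decide) (by decide) hp_3_0 hp_0_2) (by show ¬(rkT 0 2 3 < rkT 0 2 0); decide)
          rcases lt_or_eq_of_le (hWnn 1 1) with hp_1_1 | hz_1_1
          · exact absurd (hgood 3 1 0 1 (by decide) (by decide) hp_3_0 hp_1_1) (by show ¬(rkT 0 1 3 < rkT 0 1 1); decide)
          rcases lt_or_eq_of_le (hWnn 1 3) with hp_1_3 | hz_1_3
          · exact absurd (hgood 3 1 0 3 (by decide) (by decide) hp_3_0 hp_1_3) (by show ¬(rkT 0 3 3 < rkT 0 3 1); decide)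
          rcases lt_or_eq_of_le (hWnn 2 2) with hp_2_2 | hz_2_2
          · exact absurd (hgood 3 2 0 2 (by decide) (by decide) hp_3_0 hp_2_2) (by show ¬(rkT 0 2 3 < rkT 0 2 2); decide)
          rcases lt_or_eq_of_le (hWnn 2 3) with hp_2_3 | hz_2_3
          · exact absurd (hgood 3 2 0 3 (by decide) (by decide) hp_3_0 hp_2_3) (by show ¬(rkT 0 3 3 < rkT 0 3 2); decide)
          rcases lt_or_eq_of_le (hWnn 4 1) with hp_4_1 | hz_4_1
          · exact absurd (hgood 3 4 0 1 (by decide) (by decide) hp_3_0 hp_4_1) (by show ¬(rkT 0 1 3 < rkT 0 1 4); decide)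
          rcases lt_or_eq_of_le (hWnn 4 2) with hp_4_2 | hz_4_2
          · exact absurd (hgood 3 4 0 2 (by decide) (by decide) hp_3_0 hp_4_2) (by show ¬(rkT 0 2 3 < rkT 0 2 4); decide)
          linarith [hWnn 0 0, hWnn 0 1, hWnn 0 2, hWnn 0 3, hWnn 1 0, hWnn 1 1, hWnn 1 2, hWnn 1 3, hWnn 2 0, hWnn 2 1, hWnn 2 2, hWnn 2 3, hWnn 3 0, hWnn 3 1, hWnn 3 2, hWnn 3 3, hWnn 4 0, hWnn 4 1, hWnn 4 2, hWnn 4 3]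
        · -- W 3 0 = 0
          rcases lt_or_eq_of_le (hWnn 0 0) with hp_0_0 | hz_0_0
          · -- W 0 0 > 0
            rcases lt_or_eq_of_le (hWnn 1 1) with hp_1_1 | hz_1_1
            · exact absurd (hgood 0 1 0 1 (by decide) (by decide) hp_0_0 hp_1_1) (by show ¬(rkT 0 1 0 < rkT 0 1 1); decide)
            rcases lt_or_eq_of_le (hWnn 1 3) with hp_1_3 | hz_1_3
            · exact absurd (hgood 0 1 0 3 (by decide) (by decide) hp_0_0 hp_1_3) (by show ¬(rkT 0 3 0 < rkT 0 3 1); decide)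
            rcases lt_or_eq_of_le (hWnn 2 3) with hp_2_3 | hz_2_3
            · exact absurd (hgood 0 2 0 3 (by decide) (by decide) hp_0_0 hp_2_3) (by show ¬(rkT 0 3 0 < rkT 0 3 2); decide)
            rcases lt_or_eq_of_le (hWnn 3 3) with hp_3_3 | hz_3_3
            · exact absurd (hgood 0 3 0 3 (by decide) (by decide) hp_0_0 hp_3_3) (by show ¬(rkT 0 3 0 < rkT 0 3 3); decide)
            rcases lt_or_eq_of_le (hWnn 4 1) with hp_4_1 | hz_4_1
            · exact absurd (hgood 0 4 0 1 (by decide) (by decide) hp_0_0 hp_4_1) (by show ¬(rkT 0 1 0 < rkT 0 1 4); decide)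
            rcases lt_or_eq_of_le (hWnn 4 2) with hp_4_2 | hz_4_2
            · exact absurd (hgood 0 4 0 2 (by decide) (by decide) hp_0_0 hp_4_2) (by show ¬(rkT 0 2 0 < rkT 0 2 4); decide)
            linarith [hWnn 0 0, hWnn 0 1, hWnn 0 2, hWnn 0 3, hWnn 1 0, hWnn 1 1, hWnn 1 2, hWnn 1 3, hWnn 2 0, hWnn 2 1, hWnn 2 2, hWnn 2 3, hWnn 3 0, hWnn 3 1, hWnn 3 2, hWnn 3 3, hWnn 4 0, hWnn 4 1, hWnn 4 2, hWnn 4 3]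
          · -- W 0 0 = 0
            rcases lt_or_eq_of_le (hWnn 0 2) with hp_0_2 | hz_0_2
            · -- W 0 2 > 0
              rcases lt_or_eq_of_le (hWnn 2 0) with hp_2_0 | hz_2_0
              · exact absurd (hgood 0 2 2 0 (by decide) (by decide) hp_0_2 hp_2_0) (by show ¬(rkT 2 0 0 < rkT 2 0 2); decide)
              rcases lt_or_eq_of_le (hWnn 2 3) with hp_2_3 | hz_2_3
              · exact absurd (hgood 0 2 2 3 (by decide) (by decide) hp_0_2 hp_2_3) (by show ¬(rkT 2 3 0 < rkT 2 3 2); decide)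
              rcases lt_or_eq_of_le (hWnn 3 3) with hp_3_3 | hz_3_3
              · exact absurd (hgood 0 3 2 3 (by decide) (by decide) hp_0_2 hp_3_3) (by show ¬(rkT 2 3 0 < rkT 2 3 3); decide)
              rcases lt_or_eq_of_le (hWnn 4 1) with hp_4_1 | hz_4_1
              · exact absurd (hgood 0 4 2 1 (by decide) (by decide) hp_0_2 hp_4_1) (by show ¬(rkT 2 1 0 < rkT 2 1 4); decide)
              linarith [hWnn 0 0, hWnn 0 1, hWnn 0 2, hWnn 0 3, hWnn 1 0, hWnn 1 1, hWnn 1 2, hWnn 1 3, hWnn 2 0, hWnn 2 1, hWnn 2 2, hWnn 2 3, hWnn 3 0, hWnn 3 1, hWnn 3 2, hWnn 3 3, hWnn 4 0, hWnn 4 1, hWnn 4 2, hWnn 4 3]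
            · -- W 0 2 = 0
              rcases lt_or_eq_of_le (hWnn 0 1) with hp_0_1 | hz_0_1
              · -- W 0 1 > 0
                rcases lt_or_eq_of_le (hWnn 1 3) with hp_1_3 | hz_1_3
                · exact absurd (hgood 0 1 1 3 (by decide) (by decide) hp_0_1 hp_1_3) (by show ¬(rkT 1 3 0 < rkT 1 3 1); decide)
                rcases lt_or_eq_of_le (hWnn 3 2) with hp_3_2 | hz_3_2
                · exact absurd (hgood 0 3 1 2 (by decide) (by decide) hp_0_1 hp_3_2) (by show ¬(rkT 1 2 0 < rkT 1 2 3); decide)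
                rcases lt_or_eq_of_le (hWnn 3 3) with hp_3_3 | hz_3_3
                · exact absurd (hgood 0 3 1 3 (by decide) (by decide) hp_0_1 hp_3_3) (by show ¬(rkT 1 3 0 < rkT 1 3 3); decide)
                rcases lt_or_eq_of_le (hWnn 1 0) with hp_1_0 | hz_1_0
                · -- W 1 0 > 0
                  rcases lt_or_eq_of_le (hWnn 2 3) with hp_2_3 | hz_2_3
                  · exact absurd (hgood 1 2 0 3 (by decide) (by decide) hp_1_0 hp_2_3) (by show ¬(rkT 0 3 1 < rkT 0 3 2); decide)
                  linarith [hWnn 0 0, hWnn 0 1, hWnn 0 2, hWnn 0 3, hWnn 1 0, hWnn 1 1, hWnn 1 2, hWnn 1 3, hWnn 2 0, hWnn 2 1, hWnn 2 2, hWnn 2 3, hWnn 3 0, hWnn 3 1, hWnn 3 2, hWnn 3 3, hWnn 4 0, hWnn 4 1, hWnn 4 2, hWnn 4 3]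
                · -- W 1 0 = 0
                  linarith [hWnn 0 0, hWnn 0 1, hWnn 0 2, hWnn 0 3, hWnn 1 0, hWnn 1 1, hWnn 1 2, hWnn 1 3, hWnn 2 0, hWnn 2 1, hWnn 2 2, hWnn 2 3, hWnn 3 0, hWnn 3 1, hWnn 3 2, hWnn 3 3, hWnn 4 0, hWnn 4 1, hWnn 4 2, hWnn 4 3]
              · -- W 0 1 = 0
                rcases lt_or_eq_of_le (hWnn 1 0) with hp_1_0 | hz_1_0
                · -- W 1 0 > 0
                  rcases lt_or_eq_of_le (hWnn 2 3) with hp_2_3 | hz_2_3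
                  · exact absurd (hgood 1 2 0 3 (by decide) (by decide) hp_1_0 hp_2_3) (by show ¬(rkT 0 3 1 < rkT 0 3 2); decide)
                  rcases lt_or_eq_of_le (hWnn 1 1) with hp_1_1 | hz_1_1
                  · -- W 1 1 > 0
                    rcases lt_or_eq_of_le (hWnn 4 0) with hp_4_0 | hz_4_0
                    · exact absurd (hgood 1 4 1 0 (by decide) (by decide) hp_1_1 hp_4_0) (by show ¬(rkT 1 0 1 < rkT 1 0 4); decide)
                    rcases lt_or_eq_of_le (hWnn 1 3) with hp_1_3 | hz_1_3
                    · -- W 1 3 > 0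
                      rcases lt_or_eq_of_le (hWnn 3 1) with hp_3_1 | hz_3_1
                      · exact absurd (hgood 1 3 3 1 (by decide) (by decide) hp_1_3 hp_3_1) (by show ¬(rkT 3 1 1 < rkT 3 1 3); decide)
                      rcases lt_or_eq_of_le (hWnn 2 0) with hp_2_0 | hz_2_0
                      · -- W 2 0 > 0
                        rcases lt_or_eq_of_le (hWnn 4 2) with hp_4_2 | hz_4_2
                        · exact absurd (hgood 2 4 0 2 (by decide) (by decide) hp_2_0 hp_4_2) (by show ¬(rkT 0 2 2 < rkT 0 2 4); decide)
                        rcases lt_or_eq_of_le (hWnn 2 2) with hp_2_2 | hz_2_2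
                        · -- W 2 2 > 0
                          rcases lt_or_eq_of_le (hWnn 3 3) with hp_3_3 | hz_3_3
                          · exact absurd (hgood 2 3 2 3 (by decide) (by decide) hp_2_2 hp_3_3) (by show ¬(rkT 2 3 2 < rkT 2 3 3); decide)
                          rcases lt_or_eq_of_le (hWnn 3 2) with hp_3_2 | hz_3_2
                          · -- W 3 2 > 0
                            rcases lt_or_eq_of_le (hWnn 4 1) with hp_4_1 | hz_4_1
                            · exact absurd (hgood 3 4 2 1 (by decide) (by decide) hp_3_2 hp_4_1) (by show ¬(rkT 2 1 3 < rkT 2 1 4); decide)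
                            linarith [hWnn 0 0, hWnn 0 1, hWnn 0 2, hWnn 0 3, hWnn 1 0, hWnn 1 1, hWnn 1 2, hWnn 1 3, hWnn 2 0, hWnn 2 1, hWnn 2 2, hWnn 2 3, hWnn 3 0, hWnn 3 1, hWnn 3 2, hWnn 3 3, hWnn 4 0, hWnn 4 1, hWnn 4 2, hWnn 4 3]
                          · -- W 3 2 = 0
                            linarith [hWnn 0 0, hWnn 0 1, hWnn 0 2, hWnn 0 3, hWnn 1 0, hWnn 1 1, hWnn 1 2, hWnn 1 3, hWnn 2 0, hWnn 2 1, hWnn 2 2, hWnn 2 3, hWnn 3 0, hWnn 3 1, hWnn 3 2, hWnn 3 3, hWnn 4 0, hWnn 4 1, hWnn 4 2, hWnn 4 3]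
                        · -- W 2 2 = 0
                          linarith [hWnn 0 0, hWnn 0 1, hWnn 0 2, hWnn 0 3, hWnn 1 0, hWnn 1 1, hWnn 1 2, hWnn 1 3, hWnn 2 0, hWnn 2 1, hWnn 2 2, hWnn 2 3, hWnn 3 0, hWnn 3 1, hWnn 3 2, hWnn 3 3, hWnn 4 0, hWnn 4 1, hWnn 4 2, hWnn 4 3]
                      · -- W 2 0 = 0
                        linarith [hWnn 0 0, hWnn 0 1, hWnn 0 2, hWnn 0 3, hWnn 1 0, hWnn 1 1, hWnn 1 2, hWnn 1 3, hWnn 2 0, hWnn 2 1, hWnn 2 2, hWnn 2 3, hWnn 3 0, hWnn 3 1, hWnn 3 2, hWnn 3 3, hWnn 4 0, hWnn 4 1, hWnn 4 2, hWnn 4 3]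
                    · -- W 1 3 = 0
                      rcases lt_or_eq_of_le (hWnn 2 0) with hp_2_0 | hz_2_0
                      · -- W 2 0 > 0
                        rcases lt_or_eq_of_le (hWnn 4 2) with hp_4_2 | hz_4_2
                        · exact absurd (hgood 2 4 0 2 (by decide) (by decide) hp_2_0 hp_4_2) (by show ¬(rkT 0 2 2 < rkT 0 2 4); decide)
                        rcases lt_or_eq_of_le (hWnn 2 2) with hp_2_2 | hz_2_2
                        · -- W 2 2 > 0
                          rcases lt_or_eq_of_le (hWnn 3 3) with hp_3_3 | hz_3_3
                          · exact absurd (hgood 2 3 2 3 (by decide) (by decide) hp_2_2 hp_3_3) (by show ¬(rkT 2 3 2 < rkT 2 3 3); decide)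
                          linarith [hWnn 0 0, hWnn 0 1, hWnn 0 2, hWnn 0 3, hWnn 1 0, hWnn 1 1, hWnn 1 2, hWnn 1 3, hWnn 2 0, hWnn 2 1, hWnn 2 2, hWnn 2 3, hWnn 3 0, hWnn 3 1, hWnn 3 2, hWnn 3 3, hWnn 4 0, hWnn 4 1, hWnn 4 2, hWnn 4 3]
                        · -- W 2 2 = 0
                          linarith [hWnn 0 0, hWnn 0 1, hWnn 0 2, hWnn 0 3, hWnn 1 0, hWnn 1 1, hWnn 1 2, hWnn 1 3, hWnn 2 0, hWnn 2 1, hWnn 2 2, hWnn 2 3, hWnn 3 0, hWnn 3 1, hWnn 3 2, hWnn 3 3, hWnn 4 0, hWnn 4 1, hWnn 4 2, hWnn 4 3]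
                      · -- W 2 0 = 0
                        linarith [hWnn 0 0, hWnn 0 1, hWnn 0 2, hWnn 0 3, hWnn 1 0, hWnn 1 1, hWnn 1 2, hWnn 1 3, hWnn 2 0, hWnn 2 1, hWnn 2 2, hWnn 2 3, hWnn 3 0, hWnn 3 1, hWnn 3 2, hWnn 3 3, hWnn 4 0, hWnn 4 1, hWnn 4 2, hWnn 4 3]
                  · -- W 1 1 = 0
                    rcases lt_or_eq_of_le (hWnn 1 3) with hp_1_3 | hz_1_3
                    · -- W 1 3 > 0
                      rcases lt_or_eq_of_le (hWnn 3 1) with hp_3_1 | hz_3_1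
                      · exact absurd (hgood 1 3 3 1 (by decide) (by decide) hp_1_3 hp_3_1) (by show ¬(rkT 3 1 1 < rkT 3 1 3); decide)
                      linarith [hWnn 0 0, hWnn 0 1, hWnn 0 2, hWnn 0 3, hWnn 1 0, hWnn 1 1, hWnn 1 2, hWnn 1 3, hWnn 2 0, hWnn 2 1, hWnn 2 2, hWnn 2 3, hWnn 3 0, hWnn 3 1, hWnn 3 2, hWnn 3 3, hWnn 4 0, hWnn 4 1, hWnn 4 2, hWnn 4 3]
                    · -- W 1 3 = 0
                      linarith [hWnn 0 0, hWnn 0 1, hWnn 0 2, hWnn 0 3, hWnn 1 0, hWnn 1 1, hWnn 1 2, hWnn 1 3, hWnn 2 0, hWnn 2 1, hWnn 2 2, hWnn 2 3, hWnn 3 0, hWnn 3 1, hWnn 3 2, hWnn 3 3, hWnn 4 0, hWnn 4 1, hWnn 4 2, hWnn 4 3]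
                · -- W 1 0 = 0
                  rcases lt_or_eq_of_le (hWnn 1 1) with hp_1_1 | hz_1_1
                  · -- W 1 1 > 0
                    rcases lt_or_eq_of_le (hWnn 4 0) with hp_4_0 | hz_4_0
                    · exact absurd (hgood 1 4 1 0 (by decide) (by decide) hp_1_1 hp_4_0) (by show ¬(rkT 1 0 1 < rkT 1 0 4); decide)
                    linarith [hWnn 0 0, hWnn 0 1, hWnn 0 2, hWnn 0 3, hWnn 1 0, hWnn 1 1, hWnn 1 2, hWnn 1 3, hWnn 2 0, hWnn 2 1, hWnn 2 2, hWnn 2 3, hWnn 3 0, hWnn 3 1, hWnn 3 2, hWnn 3 3, hWnn 4 0, hWnn 4 1, hWnn 4 2, hWnn 4 3]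
                  · -- W 1 1 = 0
                    rcases lt_or_eq_of_le (hWnn 1 3) with hp_1_3 | hz_1_3
                    · -- W 1 3 > 0
                      rcases lt_or_eq_of_le (hWnn 3 1) with hp_3_1 | hz_3_1
                      · exact absurd (hgood 1 3 3 1 (by decide) (by decide) hp_1_3 hp_3_1) (by show ¬(rkT 3 1 1 < rkT 3 1 3); decide)
                      linarith [hWnn 0 0, hWnn 0 1, hWnn 0 2, hWnn 0 3, hWnn 1 0, hWnn 1 1, hWnn 1 2, hWnn 1 3, hWnn 2 0, hWnn 2 1, hWnn 2 2, hWnn 2 3, hWnn 3 0, hWnn 3 1, hWnn 3 2, hWnn 3 3, hWnn 4 0, hWnn 4 1, hWnn 4 2, hWnn 4 3]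
                    · -- W 1 3 = 0
                      linarith [hWnn 0 0, hWnn 0 1, hWnn 0 2, hWnn 0 3, hWnn 1 0, hWnn 1 1, hWnn 1 2, hWnn 1 3, hWnn 2 0, hWnn 2 1, hWnn 2 2, hWnn 2 3, hWnn 3 0, hWnn 3 1, hWnn 3 2, hWnn 3 3, hWnn 4 0, hWnn 4 1, hWnn 4 2, hWnn 4 3]

/-- The Acyclic System Conjecture of Ardila and Ceballos fails for `Δ_4 × Δ_3`:
there is an acyclic system of permutations of `{1, …, 5}` on `K_4` that is not
induced by any triangulation of `Δ_4 × Δ_3`. -/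
theorem acyclic_system_conjecture_false :
    ∃ σ : PermSystem 5 4, σ.Acyclic ∧
      ¬ ∃ T : Geometry.SimplicialComplex ℝ ((Fin 5 → ℝ) × (Fin 4 → ℝ)),
        IsTriangulationOf 5 4 T (prodSimplex 5 4) ∧ Induces T σ := by
  refine ⟨mySigma, mySigma_acyclic, ?_⟩
  rintro ⟨T, ⟨hvertT, hspace⟩, hind⟩
  have hpP := pPt_mem
  rw [← hspace, Geometry.SimplicialComplex.mem_space_iff] at hpP
  obtain ⟨F, hF, hpF⟩ := hpP
  rw [Finset.mem_convexHull'] at hpF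
  obtain ⟨w, hw0, hw1, hwp⟩ := hpF
  have hFv : ∀ x ∈ F, ∃ i a, x = vert 5 4 i a := fun x hx =>
    hvertT x (T.down_closed hF (Finset.singleton_subset_iff.2 hx) (Finset.singleton_nonempty x))
  set W : Fin 5 → Fin 4 → ℝ :=
    fun i a => ∑ x ∈ F.filter (fun y => y = vert 5 4 i a), w x with hWdef
  have hWnn : ∀ (i : Fin 5) (a : Fin 4), 0 ≤ W i a := fun i a =>
    Finset.sum_nonneg fun x hx => hw0 x (Finset.mem_of_mem_filter x hx)
  have hWmem : ∀ (i : Fin 5) (a : Fin 4), 0 < W i a → vert 5 4 i a ∈ F := by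
    intro i a h
    by_contra hmem
    have hempty : F.filter (fun y => y = vert 5 4 i a) = ∅ := by
      rw [Finset.filter_eq_empty_iff]
      intro x hx hcontra
      exact hmem (hcontra ▸ hx)
    rw [hWdef] at h
    simp only [hempty, Finset.sum_empty] at h
    exact lt_irrefl _ h
  have hgood : ∀ (i j : Fin 5) (a b : Fin 4), i ≠ j → a ≠ b →
      0 < W i a → 0 < W j b → mySigma.prec a b i j := by
    intro i j a b hij hab h1 h2
    have hv1 := hWmem _ _ h1
    have hv2 := hWmem _ _ h2
    have hsub : ({vert 5 4 i a, vert 5 4 j b} : Finset _) ⊆ F := by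
      intro x hx
      rcases Finset.mem_insert.1 hx with rfl | hx
      · exact hv1
      · rw [Finset.mem_singleton] at hx
        exact hx ▸ hv2
    have hface : ({vert 5 4 i a, vert 5 4 j b} : Finset _) ∈ T.faces :=
      T.down_closed hF hsub (Finset.insert_nonempty _ _)
    exact (hind i j hij a b hab).2 hface
  have hrow : ∀ i : Fin 5, ∑ a : Fin 4, W i a = pR i := by
    intro i
    have h0 := congrArg Prod.fst hwp
    rw [Prod.fst_sum] at h0
    have h1 := congrFun h0 i
    rw [Finset.sum_apply] at h1
    simp only [Prod.smul_fst, Pi.smul_apply, smul_eq_mul] at h1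
    rw [hWdef]
    rw [row_marg F w hFv i]
    exact h1
  have hcol : ∀ a : Fin 4, ∑ i : Fin 5, W i a = pC a := by
    intro a
    have h0 := congrArg Prod.snd hwp
    rw [Prod.snd_sum] at h0
    have h1 := congrFun h0 a
    rw [Finset.sum_apply] at h1
    simp only [Prod.smul_snd, Pi.smul_apply, smul_eq_mul] at h1
    rw [hWdef]
    rw [col_marg F w hFv a]
    exact h1
  have er0 : W 0 0 + W 0 1 + W 0 2 + W 0 3 = 21/127 := by
    have := hrow 0
    rw [Fin.sum_univ_four] at this
    rw [this]; norm_num [pR]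
  have er1 : W 1 0 + W 1 1 + W 1 2 + W 1 3 = 38/127 := by
    have := hrow 1
    rw [Fin.sum_univ_four] at this
    rw [this]; norm_num [pR]
  have er2 : W 2 0 + W 2 1 + W 2 2 + W 2 3 = 26/127 := by
    have := hrow 2
    rw [Fin.sum_univ_four] at this
    rw [this]; norm_num [pR]; rfl
  have er3 : W 3 0 + W 3 1 + W 3 2 + W 3 3 = 22/127 := by
    have := hrow 3
    rw [Fin.sum_univ_four] at this
    rw [this]; norm_num [pR]; rfl
  have er4 : W 4 0 + W 4 1 + W 4 2 + W 4 3 = 20/127 := by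
    have := hrow 4
    rw [Fin.sum_univ_four] at this
    rw [this]; norm_num [pR]; rfl
  have ec0 : W 0 0 + W 1 0 + W 2 0 + W 3 0 + W 4 0 = 33/127 := by
    have := hcol 0
    rw [Fin.sum_univ_five] at this
    rw [this]; norm_num [pC]
  have ec1 : W 0 1 + W 1 1 + W 2 1 + W 3 1 + W 4 1 = 28/127 := by
    have := hcol 1
    rw [Fin.sum_univ_five] at this
    rw [this]; norm_num [pC]
  have ec2 : W 0 2 + W 1 2 + W 2 2 + W 3 2 + W 4 2 = 23/127 := by
    have := hcol 2
    rw [Fin.sum_univ_five] at this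
    rw [this]; norm_num [pC]; rfl
  have ec3 : W 0 3 + W 1 3 + W 2 3 + W 3 3 + W 4 3 = 43/127 := by
    have := hcol 3
    rw [Fin.sum_univ_five] at this
    rw [this]; norm_num [pC]; rfl
  exact arith_contra W hWnn hgood er0 er1 er2 er3 er4 ec0 ec1 ec2 ec3
end

section
/- A system of permutations Σ of {1, …, n} on K_d is acyclic if and only if there exists a dual system of permutations Σ* of {1, …, d} on K_n such that for all distinct i, j ∈ {1, …, n} and all distinct a, b ∈ {1, …, d} one has i ≺^Σ_{ab} j if and only if a ≺^{Σ*}_{ij} b. Moreover, when Σ is acyclic this dual system Σ* is unique. -/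
open Finset

/-- `τ` is a dual system of permutations for `σ`: for all distinct `i, j` and distinct
`a, b` one has `i ≺^σ_{ab} j` iff `a ≺^τ_{ij} b`. -/
def IsDualSystem {n d : ℕ} (σ : PermSystem n d) (τ : PermSystem d n) : Prop :=
  ∀ i j : Fin n, i ≠ j → ∀ a b : Fin d, a ≠ b → (σ.prec a b i j ↔ τ.prec i j a b)

/-- A system of permutations is acyclic iff it has a dual system, and when the system
is acyclic the dual system is unique. -/
theorem acyclic_iff_exists_dual (n d : ℕ) (σ : PermSystem n d) :
    (σ.Acyclic ↔ ∃ τ : PermSystem d n, IsDualSystem σ τ) ∧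
    (σ.Acyclic → ∀ τ₁ τ₂ : PermSystem d n, IsDualSystem σ τ₁ → IsDualSystem σ τ₂ →
      ∀ a b : Fin d, a ≠ b → ∀ i j : Fin n, i ≠ j →
        (τ₁.prec i j a b ↔ τ₂.prec i j a b)) := by
  constructor
  · constructor
    · intro hac
      refine ⟨⟨fun i j a b => a ≠ b ∧ σ.prec a b i j, ?_, ?_, ?_, ?_⟩, ?_⟩
      · rintro i j hij a b c ⟨hab, h1⟩ ⟨hbc, h2⟩
        have hac' : a ≠ c := by
          rintro rfl
          exact hac i j hij a
            (Relation.TransGen.head ⟨hab, h1⟩ (Relation.TransGen.single ⟨hbc, h2⟩))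
        refine ⟨hac', ?_⟩
        rcases σ.total a c hac' i j hij with h | h
        · exact h
        · exfalso
          have h3 : σ.prec c a i j := (σ.rev a c hac' i j).2 h
          exact hac i j hij a
            (Relation.TransGen.head ⟨hab, h1⟩
              (Relation.TransGen.head ⟨hbc, h2⟩ (Relation.TransGen.single ⟨hac'.symm, h3⟩)))
      · rintro i j hij a ⟨haa, _⟩
        exact haa rfl
      · intro i j hij a b hab
        rcases σ.total a b hab i j hij with h | h
        · exact Or.inl ⟨hab, h⟩
        · exact Or.inr ⟨hab.symm, (σ.rev a b hab i j).2 h⟩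
      · intro i j hij a b
        constructor
        · rintro ⟨hab, h⟩
          exact ⟨hab.symm, (σ.rev a b hab i j).2 h⟩
        · rintro ⟨hba, h⟩
          exact ⟨hba.symm, (σ.rev a b hba.symm i j).1 h⟩
      · intro i j hij a b hab
        exact ⟨fun h => ⟨hab, h⟩, fun h => h.2⟩
    · rintro ⟨τ, hτ⟩ i j hij a hcyc
      have key : ∀ x y : Fin d, Relation.TransGen (σ.tournament i j) x y → τ.prec i j x y := by
        intro x y h
        induction h with
        | single h => exact (hτ i j hij _ _ h.1).1 h.2
        | tail _ h2 ih =>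
          have hxy := (hτ i j hij _ _ h2.1).1 h2.2
          exact τ.trans i j hij _ _ _ ih hxy
      exact τ.irrefl i j hij a (key a a hcyc)
  · intro _ τ₁ τ₂ h₁ h₂ a b hab i j hij
    rw [← h₁ i j hij a b hab, h₂ i j hij a b hab]
end

section
/- Let n ≥ 2 and d ≥ 2, and consider the two facets P_1 = conv{(e_i, f_a) : i ∈ {1, …, n−1}, a ∈ {1, …, d}} (a copy of Δ_{n−2} × Δ_{d−1}) and P_2 = conv{(e_i, f_a) : i ∈ {1, …, n}, a ∈ {1, …, d−1}} (a copy of Δ_{n−1} × Δ_{d−2}) of P = Δ_{n−1} × Δ_{d−1}. If T_1 is a triangulation (without extra vertices) of P_1 and T_2 is a triangulation (without extra vertices) of P_2 such that the faces of T_1 contained in P_1 ∩ P_2 are exactly the faces of T_2 contained in P_1 ∩ P_2, then there exists a triangulation T of P containing all faces of T_1 and all faces of T_2. (T is obtained by pulling/coning T_1 and T_2 to the vertex (e_n, f_d), the unique vertex lying on neither facet.) -/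
open Finset
set_option maxHeartbeats 1600000

set_option linter.unusedSectionVars false

namespace ExtAux

variable {n d : ℕ}

abbrev E (n d : ℕ) := (Fin n → ℝ) × (Fin d → ℝ)

/-- convex hull of vertices indexed by `A × B`. -/
def convSet (n d : ℕ) (A : Finset (Fin n)) (B : Finset (Fin d)) : Set (E n d) :=
  convexHull ℝ {p | ∃ i a, i ∈ A ∧ a ∈ B ∧ p = vert n d i a}

/-- the analytic description. -/
def Q (A : Finset (Fin n)) (B : Finset (Fin d)) (x : E n d) : Prop :=
  (∀ i, 0 ≤ x.1 i) ∧ (∀ a, 0 ≤ x.2 a) ∧ (∑ i, x.1 i) = 1 ∧ (∑ a, x.2 a) = 1 ∧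
    (∀ i ∉ A, x.1 i = 0) ∧ (∀ a ∉ B, x.2 a = 0)

lemma convex_Q (A : Finset (Fin n)) (B : Finset (Fin d)) : Convex ℝ {x : E n d | Q A B x} := by
  intro x hx y hy a b ha hb hab
  obtain ⟨h1, h2, h3, h4, h5, h6⟩ := hx
  obtain ⟨g1, g2, g3, g4, g5, g6⟩ := hy
  refine ⟨fun i => ?_, fun c => ?_, ?_, ?_, fun i hi => ?_, fun c hc => ?_⟩
  · have : (a • x + b • y).1 i = a * x.1 i + b * y.1 i := rfl
    rw [this]; exact add_nonneg (mul_nonneg ha (h1 i)) (mul_nonneg hb (g1 i))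
  · have : (a • x + b • y).2 c = a * x.2 c + b * y.2 c := rfl
    rw [this]; exact add_nonneg (mul_nonneg ha (h2 c)) (mul_nonneg hb (g2 c))
  · have : ∀ i, (a • x + b • y).1 i = a * x.1 i + b * y.1 i := fun _ => rfl
    simp_rw [this, Finset.sum_add_distrib, ← Finset.mul_sum, h3, g3, mul_one, hab]
  · have : ∀ c, (a • x + b • y).2 c = a * x.2 c + b * y.2 c := fun _ => rfl
    simp_rw [this, Finset.sum_add_distrib, ← Finset.mul_sum, h4, g4, mul_one, hab]
  · have : (a • x + b • y).1 i = a * x.1 i + b * y.1 i := rfl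
    rw [this, h5 i hi, g5 i hi, mul_zero, mul_zero, add_zero]
  · have : (a • x + b • y).2 c = a * x.2 c + b * y.2 c := rfl
    rw [this, h6 c hc, g6 c hc, mul_zero, mul_zero, add_zero]

lemma Q_vert {A : Finset (Fin n)} {B : Finset (Fin d)} {i : Fin n} {a : Fin d}
    (hi : i ∈ A) (ha : a ∈ B) : Q A B (vert n d i a) := by
  refine ⟨fun j => ?_, fun b => ?_, ?_, ?_, fun j hj => ?_, fun b hb => ?_⟩
  · by_cases h : j = i <;> simp [vert, Pi.single_apply, h]
  · by_cases h : b = a <;> simp [vert, Pi.single_apply, h]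
  · simp [vert, Pi.single_apply]
  · simp [vert, Pi.single_apply]
  · have : j ≠ i := by rintro rfl; exact hj hi
    simp [vert, Pi.single_apply, this]
  · have : b ≠ a := by rintro rfl; exact hb ha
    simp [vert, Pi.single_apply, this]

lemma Q_of_mem_convSet {A : Finset (Fin n)} {B : Finset (Fin d)} {x : E n d}
    (hx : x ∈ convSet n d A B) : Q A B x := by
  refine convexHull_min ?_ (convex_Q A B) hx
  rintro p ⟨i, a, hi, ha, rfl⟩
  exact Q_vert hi ha

lemma mem_convSet_of_Q {A : Finset (Fin n)} {B : Finset (Fin d)} {x : E n d}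
    (hx : Q A B x) : x ∈ convSet n d A B := by
  obtain ⟨h1, h2, h3, h4, h5, h6⟩ := hx
  have hA : ∑ i ∈ A, x.1 i = 1 :=
    (Finset.sum_subset A.subset_univ (fun i _ hi => h5 i hi)).trans h3
  have hB : ∑ a ∈ B, x.2 a = 1 :=
    (Finset.sum_subset B.subset_univ (fun a _ ha => h6 a ha)).trans h4
  have hsum : ∑ p ∈ A ×ˢ B, x.1 p.1 * x.2 p.2 = 1 := by
    rw [Finset.sum_product, ← Finset.sum_mul_sum, hA, hB, one_mul]
  have key1 : (∑ p ∈ A ×ˢ B, (x.1 p.1 * x.2 p.2) • vert n d p.1 p.2).1 = x.1 := by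
    rw [Prod.fst_sum]
    funext j
    rw [Finset.sum_apply]
    have hcong : ∀ p ∈ A ×ˢ B, ((x.1 p.1 * x.2 p.2) • vert n d p.1 p.2).1 j
        = (if p.1 = j then x.1 j * x.2 p.2 else 0) := by
      rintro ⟨i, a⟩ _
      simp only [vert, Prod.smul_fst, Pi.smul_apply, smul_eq_mul, Pi.single_apply]
      by_cases h : i = j
      · subst h; simp
      · rw [if_neg (fun hh => h hh.symm), if_neg h, mul_zero]
    rw [Finset.sum_congr rfl hcong, Finset.sum_product_right]
    simp_rw [Finset.sum_ite_eq' A j]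
    by_cases hj : j ∈ A
    · simp only [hj, if_true, ← Finset.mul_sum, hB, mul_one]
    · simp [hj, h5 j hj]
  have key2 : (∑ p ∈ A ×ˢ B, (x.1 p.1 * x.2 p.2) • vert n d p.1 p.2).2 = x.2 := by
    rw [Prod.snd_sum]
    funext b
    rw [Finset.sum_apply]
    have hcong : ∀ p ∈ A ×ˢ B, ((x.1 p.1 * x.2 p.2) • vert n d p.1 p.2).2 b
        = (if p.2 = b then x.1 p.1 * x.2 b else 0) := by
      rintro ⟨i, a⟩ _
      simp only [vert, Prod.smul_snd, Pi.smul_apply, smul_eq_mul, Pi.single_apply]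
      by_cases h : a = b
      · subst h; simp
      · rw [if_neg (fun hh => h hh.symm), if_neg h, mul_zero]
    rw [Finset.sum_congr rfl hcong, Finset.sum_product]
    simp_rw [Finset.sum_ite_eq' B b]
    by_cases hb : b ∈ B
    · simp only [hb, if_true, ← Finset.sum_mul, hA, one_mul]
    · simp [hb, h6 b hb]
  have hxeq : (A ×ˢ B).centerMass (fun p => x.1 p.1 * x.2 p.2)
      (fun p => vert n d p.1 p.2) = x := by
    rw [Finset.centerMass_eq_of_sum_1 _ _ hsum]
    exact Prod.ext key1 key2
  have hmem := Finset.centerMass_mem_convexHull (A ×ˢ B)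
    (w := fun p : Fin n × Fin d => x.1 p.1 * x.2 p.2)
    (z := fun p : Fin n × Fin d => vert n d p.1 p.2)
    (s := {p : E n d | ∃ i a, i ∈ A ∧ a ∈ B ∧ p = vert n d i a})
    (fun p _ => mul_nonneg (h1 p.1) (h2 p.2)) (by rw [hsum]; norm_num)
    (fun p hp => by
      rw [Finset.mem_product] at hp
      exact ⟨p.1, p.2, hp.1, hp.2, rfl⟩)
  rwa [hxeq] at hmem

end ExtAux

namespace ExtAux2

variable {V : Type*} [AddCommGroup V] [Module ℝ V]

lemma cone_mem {v : V} {S : Set V} {c : ℝ} {y : V} (hc : 0 ≤ c) (hc1 : c ≤ 1)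
    (hy : y ∈ convexHull ℝ S) :
    c • v + (1 - c) • y ∈ convexHull ℝ (insert v S) := by
  have hv : v ∈ convexHull ℝ (insert v S) := subset_convexHull ℝ _ (Set.mem_insert _ _)
  have hy' : y ∈ convexHull ℝ (insert v S) :=
    convexHull_mono (Set.subset_insert _ _) hy
  exact (convex_convexHull ℝ _) hv hy' hc (by linarith) (by ring)

variable [DecidableEq V]

lemma cone_rep {v : V} {s : Finset V} (hvs : v ∉ s) {x : V}
    (hx : x ∈ convexHull ℝ ((insert v s : Finset V) : Set V)) :
    ∃ c : ℝ, 0 ≤ c ∧ c ≤ 1 ∧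
      ((c = 1 ∧ x = v) ∨
        (c < 1 ∧ ∃ y ∈ convexHull ℝ (s : Set V), x = c • v + (1 - c) • y)) := by
  rw [Finset.convexHull_eq] at hx
  obtain ⟨w, hw0, hw1, hwx⟩ := hx
  rw [Finset.centerMass_eq_of_sum_1 _ _ hw1] at hwx
  rw [Finset.sum_insert hvs] at hw1 hwx
  set c := w v with hc
  have hrest0 : ∀ p ∈ s, 0 ≤ w p := fun p hp => hw0 p (Finset.mem_insert_of_mem hp)
  have hrest : ∑ p ∈ s, w p = 1 - c := by linarith
  have hc0 : 0 ≤ c := hw0 v (Finset.mem_insert_self _ _)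
  have hc1 : c ≤ 1 := by
    have : 0 ≤ ∑ p ∈ s, w p := Finset.sum_nonneg hrest0
    linarith
  rcases eq_or_lt_of_le hc1 with heq | hlt
  · refine ⟨c, hc0, hc1, Or.inl ⟨heq, ?_⟩⟩
    have hz : ∑ p ∈ s, w p = 0 := by rw [hrest, heq]; ring
    have hall : ∀ p ∈ s, w p = 0 := (Finset.sum_eq_zero_iff_of_nonneg hrest0).1 hz
    have hzero : ∑ p ∈ s, w p • (id p : V) = 0 :=
      Finset.sum_eq_zero fun p hp => by rw [hall p hp, zero_smul]
    rw [← hwx, hzero, add_zero, id, heq, one_smul]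
  · have hne : (1 - c) ≠ 0 := by linarith
    refine ⟨c, hc0, hc1, Or.inr ⟨hlt, s.centerMass w id, ?_, ?_⟩⟩
    · exact Finset.centerMass_mem_convexHull s hrest0 (by rw [hrest]; linarith)
        (fun p hp => Finset.mem_coe.2 hp)
    · rw [← hwx, Finset.centerMass, hrest, smul_smul, mul_inv_cancel₀ hne, one_smul, id]

lemma filter_conv (g : V →ₗ[ℝ] ℝ) (s : Finset V) (h0 : ∀ p ∈ s, 0 ≤ g p) {x : V}
    (hx : x ∈ convexHull ℝ (s : Set V)) (hgx : g x = 0) :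
    x ∈ convexHull ℝ ((s.filter (fun p => g p = 0) : Finset V) : Set V) := by
  classical
  rw [Finset.convexHull_eq] at hx
  obtain ⟨w, hw0, hw1, hwx⟩ := hx
  rw [Finset.centerMass_eq_of_sum_1 _ _ hw1] at hwx
  simp only [id] at hwx
  have hterms : ∀ p ∈ s, 0 ≤ w p * g p := fun p hp => mul_nonneg (hw0 p hp) (h0 p hp)
  have hsum0 : ∑ p ∈ s, w p * g p = 0 := by
    have : g x = ∑ p ∈ s, w p * g p := by
      rw [← hwx, map_sum]
      exact Finset.sum_congr rfl fun p _ => by rw [map_smul, smul_eq_mul]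
    rw [← this, hgx]
  have hzero : ∀ p ∈ s, w p * g p = 0 := (Finset.sum_eq_zero_iff_of_nonneg hterms).1 hsum0
  set t := s.filter (fun p => g p = 0) with ht
  have hwzero : ∀ p ∈ s, p ∉ t → w p = 0 := by
    intro p hp hpt
    rcases mul_eq_zero.1 (hzero p hp) with h | h
    · exact h
    · exact absurd (Finset.mem_filter.2 ⟨hp, h⟩) hpt
  have hsum1 : ∑ p ∈ t, w p = 1 :=
    (Finset.sum_subset (Finset.filter_subset _ _) hwzero).trans hw1
  have hxeq : ∑ p ∈ t, w p • p = x :=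
    (Finset.sum_subset (Finset.filter_subset _ _)
      (fun p hp hpt => by rw [hwzero p hp hpt, zero_smul])).trans hwx
  have := Finset.centerMass_mem_convexHull t
    (fun p hp => hw0 p (Finset.mem_filter.1 hp).1) (by rw [hsum1]; norm_num)
    (fun p hp => Finset.mem_coe.2 hp) (z := id)
  rwa [Finset.centerMass_eq_of_sum_1 _ _ hsum1, show (∑ p ∈ t, w p • id p) = x from hxeq]
    at this

lemma notMem_affineSpan_of_linear (f : V →ₗ[ℝ] ℝ) (s : Set V)
    (hs : ∀ p ∈ s, f p = 0) {v : V} (hv : f v ≠ 0) : v ∉ affineSpan ℝ s := by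
  intro h
  have hsub : s ⊆ (LinearMap.ker f).toAffineSubspace := fun p hp => by
    simpa [Submodule.mem_toAffineSubspace, LinearMap.mem_ker] using hs p hp
  exact hv (by simpa [Submodule.mem_toAffineSubspace, LinearMap.mem_ker] using
    affineSpan_le.2 hsub h)

lemma affineIndependent_insert {s : Finset V} {v : V}
    (hs : AffineIndependent ℝ ((↑) : {x // x ∈ s} → V))
    (hv : v ∉ affineSpan ℝ (s : Set V)) :
    AffineIndependent ℝ ((↑) : {x // x ∈ insert v s} → V) := by
  by_cases hvs : v ∈ s
  · rw [Finset.insert_eq_self.2 hvs]; exact hs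
  set i : {x // x ∈ insert v s} := ⟨v, Finset.mem_insert_self _ _⟩ with hi
  have hne : ∀ x : {x // x ∈ insert v s}, x ≠ i ↔ (x : V) ∈ s := by
    intro x
    constructor
    · intro hx
      rcases Finset.mem_insert.1 x.2 with h | h
      · exact absurd (Subtype.ext h) hx
      · exact h
    · intro hxs h
      apply hvs
      have : (x : V) = v := by rw [h]
      rwa [this] at hxs
  apply AffineIndependent.affineIndependent_of_notMem_span (i := i)
  · refine (affineIndependent_equiv
      (⟨fun x => ⟨⟨x, Finset.mem_insert_of_mem x.2⟩, (hne _).2 x.2⟩,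
        fun y => ⟨y.1, (hne _).1 y.2⟩, fun x => rfl, fun y => rfl⟩ :
        {x // x ∈ s} ≃ {y : {x // x ∈ insert v s} // y ≠ i})).1 ?_
    exact hs
  · have himg : (fun x : {x // x ∈ insert v s} => (x : V)) '' {x | x ≠ i} = (s : Set V) := by
      ext p
      constructor
      · rintro ⟨x, hx, rfl⟩
        exact (hne x).1 hx
      · intro hp
        exact ⟨⟨p, Finset.mem_insert_of_mem hp⟩, (hne _).2 hp, rfl⟩
    rw [himg]
    exact hv

end ExtAux2

/-- Triangulations of the two facets `Δ_{n-2} × Δ_{d-1}` and `Δ_{n-1} × Δ_{d-2}` of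
`Δ_{n-1} × Δ_{d-1}` that agree on the common face extend to a triangulation of the
whole product. -/
theorem extend_from_two_facets (n d : ℕ) (hn : 2 ≤ n) (hd : 2 ≤ d)
    (T₁ T₂ : Geometry.SimplicialComplex ℝ ((Fin n → ℝ) × (Fin d → ℝ)))
    (hT₁ : IsTriangulationOf n d T₁
      (convexHull ℝ {p | ∃ (i : Fin n) (a : Fin d), (i : ℕ) < n - 1 ∧ p = vert n d i a}))
    (hT₂ : IsTriangulationOf n d T₂
      (convexHull ℝ {p | ∃ (i : Fin n) (a : Fin d), (a : ℕ) < d - 1 ∧ p = vert n d i a}))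
    (hagree : ∀ s : Finset ((Fin n → ℝ) × (Fin d → ℝ)),
      (s : Set ((Fin n → ℝ) × (Fin d → ℝ))) ⊆
          (convexHull ℝ {p | ∃ (i : Fin n) (a : Fin d), (i : ℕ) < n - 1 ∧ p = vert n d i a}) ∩
          (convexHull ℝ {p | ∃ (i : Fin n) (a : Fin d), (a : ℕ) < d - 1 ∧ p = vert n d i a}) →
        (s ∈ T₁.faces ↔ s ∈ T₂.faces)) :
    ∃ T : Geometry.SimplicialComplex ℝ ((Fin n → ℝ) × (Fin d → ℝ)),
      IsTriangulationOf n d T (prodSimplex n d) ∧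
      T₁.faces ⊆ T.faces ∧ T₂.faces ⊆ T.faces := by
  classical
  obtain ⟨hvert₁, hsp₁⟩ := hT₁
  obtain ⟨hvert₂, hsp₂⟩ := hT₂
  have hi₀lt : n - 1 < n := by omega
  have ha₀lt : d - 1 < d := by omega
  set i₀ : Fin n := ⟨n - 1, hi₀lt⟩ with hi₀def
  set a₀ : Fin d := ⟨d - 1, ha₀lt⟩ with ha₀def
  set v : (Fin n → ℝ) × (Fin d → ℝ) := vert n d i₀ a₀ with hvdef
  set A₁ : Finset (Fin n) := Finset.univ.erase i₀ with hA₁def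
  set B₂ : Finset (Fin d) := Finset.univ.erase a₀ with hB₂def
  -- rewrite the three hull sets into `convSet` form
  have hgen1 : {p : (Fin n → ℝ) × (Fin d → ℝ) | ∃ (i : Fin n) (a : Fin d), (i : ℕ) < n - 1 ∧ p = vert n d i a}
      = {p | ∃ i a, i ∈ A₁ ∧ a ∈ Finset.univ ∧ p = vert n d i a} := by
    ext p
    constructor
    · rintro ⟨i, a, hi, rfl⟩
      refine ⟨i, a, Finset.mem_erase.2 ⟨?_, Finset.mem_univ _⟩, Finset.mem_univ _, rfl⟩
      intro h
      rw [h] at hi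
      simp only [i₀, hi₀def] at hi
      omega
    · rintro ⟨i, a, hi, -, rfl⟩
      refine ⟨i, a, ?_, rfl⟩
      have h1 := (Finset.mem_erase.1 hi).1
      have h2 := i.isLt
      have : (i : ℕ) ≠ n - 1 := fun h => h1 (Fin.ext h)
      omega
  have hgen2 : {p : (Fin n → ℝ) × (Fin d → ℝ) | ∃ (i : Fin n) (a : Fin d), (a : ℕ) < d - 1 ∧ p = vert n d i a}
      = {p | ∃ i a, i ∈ Finset.univ ∧ a ∈ B₂ ∧ p = vert n d i a} := by
    ext p
    constructor
    · rintro ⟨i, a, ha, rfl⟩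
      refine ⟨i, a, Finset.mem_univ _, Finset.mem_erase.2 ⟨?_, Finset.mem_univ _⟩, rfl⟩
      intro h
      rw [h] at ha
      simp only [a₀, ha₀def] at ha
      omega
    · rintro ⟨i, a, -, ha, rfl⟩
      refine ⟨i, a, ?_, rfl⟩
      have h1 := (Finset.mem_erase.1 ha).1
      have h2 := a.isLt
      have : (a : ℕ) ≠ d - 1 := fun h => h1 (Fin.ext h)
      omega
  have hP1 : convexHull ℝ {p : (Fin n → ℝ) × (Fin d → ℝ) | ∃ (i : Fin n) (a : Fin d), (i : ℕ) < n - 1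
      ∧ p = vert n d i a} = ExtAux.convSet n d A₁ Finset.univ := by
    rw [ExtAux.convSet, hgen1]
  have hP2 : convexHull ℝ {p : (Fin n → ℝ) × (Fin d → ℝ) | ∃ (i : Fin n) (a : Fin d), (a : ℕ) < d - 1
      ∧ p = vert n d i a} = ExtAux.convSet n d Finset.univ B₂ := by
    rw [ExtAux.convSet, hgen2]
  have hPfull : prodSimplex n d = ExtAux.convSet n d (Finset.univ : Finset (Fin n))
      (Finset.univ : Finset (Fin d)) := by
    rw [prodSimplex, ExtAux.convSet]
    congr 1
    ext p
    simp
  rw [hP1] at hsp₁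
  rw [hP2] at hsp₂
  rw [hP1, hP2] at hagree
  -- basic facts
  have hQmono : ∀ {x : (Fin n → ℝ) × (Fin d → ℝ)} {A : Finset (Fin n)} {B : Finset (Fin d)},
      ExtAux.Q A B x → ExtAux.Q Finset.univ Finset.univ x := by
    rintro x A B ⟨h1, h2, h3, h4, h5, h6⟩
    exact ⟨h1, h2, h3, h4, fun i hi => absurd (Finset.mem_univ i) hi,
      fun a ha => absurd (Finset.mem_univ a) ha⟩
  set Base : Set (Finset ((Fin n → ℝ) × (Fin d → ℝ))) := T₁.faces ∪ T₂.faces with hBase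
  have hconv₁ : ∀ s ∈ T₁.faces, convexHull ℝ (s : Set ((Fin n → ℝ) × (Fin d → ℝ))) ⊆ ExtAux.convSet n d A₁ Finset.univ :=
    fun s hs => by rw [← hsp₁]; exact T₁.convexHull_subset_space hs
  have hconv₂ : ∀ s ∈ T₂.faces, convexHull ℝ (s : Set ((Fin n → ℝ) × (Fin d → ℝ))) ⊆ ExtAux.convSet n d Finset.univ B₂ :=
    fun s hs => by rw [← hsp₂]; exact T₂.convexHull_subset_space hs
  have hQ1 : ∀ x ∈ ExtAux.convSet n d A₁ Finset.univ, ExtAux.Q A₁ Finset.univ x :=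
    fun x hx => ExtAux.Q_of_mem_convSet hx
  have hQ2 : ∀ x ∈ ExtAux.convSet n d Finset.univ B₂, ExtAux.Q Finset.univ B₂ x :=
    fun x hx => ExtAux.Q_of_mem_convSet hx
  have hQP : ∀ t ∈ Base, ∀ y ∈ convexHull ℝ (t : Set ((Fin n → ℝ) × (Fin d → ℝ))),
      ExtAux.Q Finset.univ Finset.univ y := by
    rintro t (ht | ht) y hy
    · exact hQmono (hQ1 y (hconv₁ t ht hy))
    · exact hQmono (hQ2 y (hconv₂ t ht hy))
  set φ₁ : ((Fin n → ℝ) × (Fin d → ℝ)) →ₗ[ℝ] ℝ :=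
    (LinearMap.proj i₀).comp (LinearMap.fst ℝ (Fin n → ℝ) (Fin d → ℝ)) with hφ₁def
  set φ₂ : ((Fin n → ℝ) × (Fin d → ℝ)) →ₗ[ℝ] ℝ :=
    (LinearMap.proj a₀).comp (LinearMap.snd ℝ (Fin n → ℝ) (Fin d → ℝ)) with hφ₂def
  have hφ₁app : ∀ x : (Fin n → ℝ) × (Fin d → ℝ), φ₁ x = x.1 i₀ := fun _ => rfl
  have hφ₂app : ∀ x : (Fin n → ℝ) × (Fin d → ℝ), φ₂ x = x.2 a₀ := fun _ => rfl
  have hφ₁v : φ₁ v = 1 := by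
    rw [hφ₁app, hvdef]
    simp [vert]
  have hφ₂v : φ₂ v = 1 := by
    rw [hφ₂app, hvdef]
    simp [vert]
  have hzero₁ : ∀ x ∈ ExtAux.convSet n d A₁ Finset.univ, φ₁ x = 0 := by
    intro x hx
    rw [hφ₁app]
    exact (hQ1 x hx).2.2.2.2.1 i₀ (Finset.notMem_erase _ _)
  have hzero₂ : ∀ x ∈ ExtAux.convSet n d Finset.univ B₂, φ₂ x = 0 := by
    intro x hx
    rw [hφ₂app]
    exact (hQ2 x hx).2.2.2.2.2 a₀ (Finset.notMem_erase _ _)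
  -- the functional adapted to a base face
  have hkey : ∀ s ∈ Base, ∃ ψ : ((Fin n → ℝ) × (Fin d → ℝ)) →ₗ[ℝ] ℝ,
      (∀ x ∈ convexHull ℝ (s : Set ((Fin n → ℝ) × (Fin d → ℝ))), ψ x = 0) ∧ ψ v = 1 ∧
      (∀ t ∈ Base, ∀ y ∈ convexHull ℝ (t : Set ((Fin n → ℝ) × (Fin d → ℝ))), 0 ≤ ψ y) := by
    rintro s (hs | hs)
    · exact ⟨φ₁, fun x hx => hzero₁ x (hconv₁ s hs hx), hφ₁v,
        fun t ht y hy => by rw [hφ₁app]; exact (hQP t ht y hy).1 i₀⟩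
    · exact ⟨φ₂, fun x hx => hzero₂ x (hconv₂ s hs hx), hφ₂v,
        fun t ht y hy => by rw [hφ₂app]; exact (hQP t ht y hy).2.1 a₀⟩
  have hvnot : ∀ s ∈ Base, v ∉ s := by
    intro s hs hvmem
    obtain ⟨ψ, hψ0, hψv, -⟩ := hkey s hs
    rw [hψ0 v (subset_convexHull ℝ _ hvmem)] at hψv
    exact zero_ne_one hψv
  have haffv : ∀ s ∈ Base, v ∉ affineSpan ℝ (s : Set ((Fin n → ℝ) × (Fin d → ℝ))) := by
    intro s hs
    obtain ⟨ψ, hψ0, hψv, -⟩ := hkey s hs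
    exact ExtAux2.notMem_affineSpan_of_linear ψ _
      (fun p hp => hψ0 p (subset_convexHull ℝ _ hp)) (by rw [hψv]; exact one_ne_zero)
  have hindepBase : ∀ s ∈ Base,
      AffineIndependent ℝ ((↑) : {x // x ∈ s} → (Fin n → ℝ) × (Fin d → ℝ)) := by
    rintro s (hs | hs)
    · exact T₁.indep hs
    · exact T₂.indep hs
  have hdownBase : ∀ s ∈ Base, ∀ t, t ⊆ s → t ≠ ∅ → t ∈ Base := by
    rintro s (hs | hs) t hts htne
    · exact Or.inl (T₁.down_closed hs hts (Finset.nonempty_iff_ne_empty.2 htne))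
    · exact Or.inr (T₂.down_closed hs hts (Finset.nonempty_iff_ne_empty.2 htne))
  -- mixed base-base intersection
  have hmixed : ∀ s ∈ T₁.faces, ∀ t ∈ T₂.faces,
      convexHull ℝ (s : Set ((Fin n → ℝ) × (Fin d → ℝ))) ∩ convexHull ℝ (t : Set ((Fin n → ℝ) × (Fin d → ℝ)))
        ⊆ convexHull ℝ ((s : Set ((Fin n → ℝ) × (Fin d → ℝ))) ∩ (t : Set ((Fin n → ℝ) × (Fin d → ℝ)))) := by
    intro s hs t ht x hx
    obtain ⟨hxs, hxt⟩ := hx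
    have hx2 : φ₂ x = 0 := hzero₂ x (hconv₂ t ht hxt)
    have hnn : ∀ p ∈ s, 0 ≤ φ₂ p := fun p hp => by
      rw [hφ₂app]
      exact (hQ1 p (hconv₁ s hs (subset_convexHull ℝ _ hp))).2.1 a₀
    have hxs' := ExtAux2.filter_conv φ₂ s hnn hxs hx2
    set s' := s.filter (fun p => φ₂ p = 0) with hs'def
    have hs'ne : s' ≠ ∅ := by
      intro h
      rw [h] at hxs'
      simp at hxs'
    have hs'1 : s' ∈ T₁.faces := T₁.down_closed hs (Finset.filter_subset _ _) (Finset.nonempty_iff_ne_empty.2 hs'ne)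
    have hs'sub : (s' : Set ((Fin n → ℝ) × (Fin d → ℝ))) ⊆ ExtAux.convSet n d A₁ Finset.univ
        ∩ ExtAux.convSet n d Finset.univ B₂ := by
      intro p hp
      have hp1 : p ∈ ExtAux.convSet n d A₁ Finset.univ :=
        hconv₁ s' hs'1 (subset_convexHull ℝ _ hp)
      refine ⟨hp1, ?_⟩
      obtain ⟨h1, h2, h3, h4, h5, h6⟩ := hQ1 p hp1
      have hp2 : p.2 a₀ = 0 := by
        have := (Finset.mem_filter.1 hp).2
        rwa [hφ₂app] at this
      refine ExtAux.mem_convSet_of_Q ⟨h1, h2, h3, h4,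
        fun i hi => absurd (Finset.mem_univ i) hi, fun a ha => ?_⟩
      have : a = a₀ := by
        by_contra hne
        exact ha (Finset.mem_erase.2 ⟨hne, Finset.mem_univ _⟩)
      rwa [this]
    have hs'2 : s' ∈ T₂.faces := (hagree s' hs'sub).1 hs'1
    have := T₂.inter_subset_convexHull hs'2 ht ⟨hxs', hxt⟩
    exact convexHull_mono
      (Set.inter_subset_inter_left _ (Finset.coe_subset.2 (Finset.filter_subset _ _))) this
  have hbase : ∀ s ∈ Base, ∀ t ∈ Base,
      convexHull ℝ (s : Set ((Fin n → ℝ) × (Fin d → ℝ))) ∩ convexHull ℝ (t : Set ((Fin n → ℝ) × (Fin d → ℝ)))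
        ⊆ convexHull ℝ ((s : Set ((Fin n → ℝ) × (Fin d → ℝ))) ∩ (t : Set ((Fin n → ℝ) × (Fin d → ℝ)))) := by
    rintro s (hs | hs) t (ht | ht)
    · exact T₁.inter_subset_convexHull hs ht
    · exact hmixed s hs t ht
    · intro x hx
      rw [Set.inter_comm]
      rw [Set.inter_comm] at hx
      exact hmixed t ht s hs hx
    · exact T₂.inter_subset_convexHull hs ht
  -- the family of faces of the new complex
  set Faces : Set (Finset ((Fin n → ℝ) × (Fin d → ℝ))) :=
    Base ∪ ((fun s => insert v s) '' Base) ∪ {({v} : Finset _)} with hFaces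
  have hmemF : ∀ s, s ∈ Faces ↔ s ∈ Base ∨ (∃ s' ∈ Base, s = insert v s') ∨ s = {v} := by
    intro s
    constructor
    · rintro ((h | ⟨s', hs', rfl⟩) | h)
      · exact Or.inl h
      · exact Or.inr (Or.inl ⟨s', hs', rfl⟩)
      · exact Or.inr (Or.inr h)
    · rintro (h | ⟨s', hs', rfl⟩ | h)
      · exact Or.inl (Or.inl h)
      · exact Or.inl (Or.inr ⟨s', hs', rfl⟩)
      · exact Or.inr h
  -- base-cone intersection
  have hBC : ∀ s ∈ Base, ∀ t' ∈ Base,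
      convexHull ℝ (s : Set ((Fin n → ℝ) × (Fin d → ℝ))) ∩ convexHull ℝ ((insert v t' : Finset _) : Set ((Fin n → ℝ) × (Fin d → ℝ)))
        ⊆ convexHull ℝ ((s : Set ((Fin n → ℝ) × (Fin d → ℝ))) ∩ ((insert v t' : Finset _) : Set ((Fin n → ℝ) × (Fin d → ℝ)))) := by
    intro s hs t' ht' x hx
    obtain ⟨hxs, hxc⟩ := hx
    obtain ⟨ψ, hψ0, hψv, hψnn⟩ := hkey s hs
    obtain ⟨c, hc0, hc1, hrep⟩ := ExtAux2.cone_rep (hvnot t' ht') hxc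
    have hψx : ψ x = 0 := hψ0 x hxs
    rcases hrep with ⟨-, rfl⟩ | ⟨hclt, y, hy, rfl⟩
    · rw [hψv] at hψx
      exact absurd hψx one_ne_zero
    · have hψy : 0 ≤ ψ y := hψnn t' ht' y hy
      have hexp : ψ (c • v + (1 - c) • y) = c * 1 + (1 - c) * ψ y := by
        rw [map_add, map_smul, map_smul, smul_eq_mul, smul_eq_mul, hψv]
      rw [hexp] at hψx
      have hc : c = 0 := by nlinarith
      subst hc
      rw [zero_smul, zero_add, sub_zero, one_smul] at *
      have := hbase s hs t' ht' ⟨hxs, hy⟩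
      refine convexHull_mono ?_ this
      refine Set.inter_subset_inter_right _ ?_
      rw [Finset.coe_insert]
      exact Set.subset_insert _ _
  -- base-{v} intersection is empty
  have hBv : ∀ s ∈ Base, ∀ x, x ∈ convexHull ℝ (s : Set ((Fin n → ℝ) × (Fin d → ℝ))) → x = v → False := by
    intro s hs x hxs hxv
    obtain ⟨ψ, hψ0, hψv, -⟩ := hkey s hs
    have := hψ0 x hxs
    rw [hxv, hψv] at this
    exact one_ne_zero this
  -- cone values
  have hconeval : ∀ s' ∈ Base, ∀ (ψ : ((Fin n → ℝ) × (Fin d → ℝ)) →ₗ[ℝ] ℝ),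
      (∀ x ∈ convexHull ℝ (s' : Set ((Fin n → ℝ) × (Fin d → ℝ))), ψ x = 0) → ψ v = 1 →
      ∀ c y, y ∈ convexHull ℝ (s' : Set ((Fin n → ℝ) × (Fin d → ℝ))) → ψ (c • v + (1 - c) • y) = c := by
    intro s' hs' ψ hψ0 hψv c y hy
    rw [map_add, map_smul, map_smul, smul_eq_mul, smul_eq_mul, hψv, hψ0 y hy]
    ring
  -- cone-cone intersection
  have hCC : ∀ s' ∈ Base, ∀ t' ∈ Base,
      convexHull ℝ ((insert v s' : Finset _) : Set ((Fin n → ℝ) × (Fin d → ℝ)))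
          ∩ convexHull ℝ ((insert v t' : Finset _) : Set ((Fin n → ℝ) × (Fin d → ℝ)))
        ⊆ convexHull ℝ (((insert v s' : Finset _) : Set ((Fin n → ℝ) × (Fin d → ℝ)))
          ∩ ((insert v t' : Finset _) : Set ((Fin n → ℝ) × (Fin d → ℝ)))) := by
    intro s' hs' t' ht' x hx
    obtain ⟨hxs, hxt⟩ := hx
    have hvmem : v ∈ ((insert v s' : Finset _) : Set ((Fin n → ℝ) × (Fin d → ℝ))) ∩ ((insert v t' : Finset _) : Set ((Fin n → ℝ) × (Fin d → ℝ))) := by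
      constructor <;> · rw [Finset.coe_insert]; exact Set.mem_insert _ _
    obtain ⟨c, hc0, hc1, hreps⟩ := ExtAux2.cone_rep (hvnot s' hs') hxs
    obtain ⟨c', hc'0, hc'1, hrept⟩ := ExtAux2.cone_rep (hvnot t' ht') hxt
    rcases hreps with ⟨-, rfl⟩ | ⟨hclt, y, hy, hxy⟩
    · exact subset_convexHull ℝ _ hvmem
    rcases hrept with ⟨-, hxv⟩ | ⟨hc'lt, z, hz, hxz⟩
    · rw [hxv] at hxy ⊢
      exact subset_convexHull ℝ _ hvmem
    obtain ⟨ψs, hψs0, hψsv, hψsnn⟩ := hkey s' hs'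
    obtain ⟨ψt, hψt0, hψtv, hψtnn⟩ := hkey t' ht'
    have h1 : ψs x = c := by rw [hxy]; exact hconeval s' hs' ψs hψs0 hψsv c y hy
    have h2 : ψt x = c' := by rw [hxz]; exact hconeval t' ht' ψt hψt0 hψtv c' z hz
    have h3 : c ≤ ψt x := by
      rw [hxy, map_add, map_smul, map_smul, smul_eq_mul, smul_eq_mul, hψtv]
      have := hψtnn s' hs' y hy
      nlinarith
    have h4 : c' ≤ ψs x := by
      rw [hxz, map_add, map_smul, map_smul, smul_eq_mul, smul_eq_mul, hψsv]
      have := hψsnn t' ht' z hz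
      nlinarith
    have hcc : c = c' := le_antisymm (h2 ▸ h3) (h1 ▸ h4)
    subst hcc
    have hyz : y = z := by
      have h5 : (1 - c) • y = (1 - c) • z := by
        have := hxy.symm.trans hxz
        exact add_left_cancel this
      have hne : (1 - c) ≠ 0 := by linarith
      exact smul_right_injective _ hne h5
    subst hyz
    have hyin := hbase s' hs' t' ht' ⟨hy, hz⟩
    rw [hxy]
    have := ExtAux2.cone_mem (v := v) hc0 hc1 hyin
    refine convexHull_mono ?_ this
    rw [Finset.coe_insert, Finset.coe_insert, ← Set.insert_inter_distrib]
  -- assemble the simplicial complex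
  -- further helper facts
  have hsingleton : ∀ x : (Fin n → ℝ) × (Fin d → ℝ),
      x ∈ convexHull ℝ (({v} : Finset _) : Set ((Fin n → ℝ) × (Fin d → ℝ))) ↔ x = v := by
    intro x
    rw [Finset.coe_singleton, convexHull_singleton, Set.mem_singleton_iff]
  have hcomm : ∀ s t : Finset ((Fin n → ℝ) × (Fin d → ℝ)),
      (convexHull ℝ (t : Set ((Fin n → ℝ) × (Fin d → ℝ)))
        ∩ convexHull ℝ (s : Set ((Fin n → ℝ) × (Fin d → ℝ)))
        ⊆ convexHull ℝ ((t : Set ((Fin n → ℝ) × (Fin d → ℝ))) ∩ (s : Set _))) →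
      convexHull ℝ (s : Set ((Fin n → ℝ) × (Fin d → ℝ)))
        ∩ convexHull ℝ (t : Set ((Fin n → ℝ) × (Fin d → ℝ)))
        ⊆ convexHull ℝ ((s : Set ((Fin n → ℝ) × (Fin d → ℝ))) ∩ (t : Set _)) := by
    intro s t h x hx
    rw [Set.inter_comm]
    exact h ⟨hx.2, hx.1⟩
  have hBv' : ∀ s ∈ Base,
      convexHull ℝ (s : Set ((Fin n → ℝ) × (Fin d → ℝ)))
        ∩ convexHull ℝ (({v} : Finset _) : Set ((Fin n → ℝ) × (Fin d → ℝ)))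
        ⊆ convexHull ℝ ((s : Set ((Fin n → ℝ) × (Fin d → ℝ))) ∩ (({v} : Finset _) : Set _)) := by
    intro s hs x hx
    exact absurd ((hsingleton x).1 hx.2) (fun h => hBv s hs x hx.1 h)
  have hCv : ∀ s' ∈ Base,
      convexHull ℝ ((insert v s' : Finset _) : Set ((Fin n → ℝ) × (Fin d → ℝ)))
        ∩ convexHull ℝ (({v} : Finset _) : Set ((Fin n → ℝ) × (Fin d → ℝ)))
        ⊆ convexHull ℝ (((insert v s' : Finset _) : Set ((Fin n → ℝ) × (Fin d → ℝ)))
          ∩ (({v} : Finset _) : Set _)) := by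
    intro s' hs' x hx
    have hxv := (hsingleton x).1 hx.2
    subst hxv
    refine subset_convexHull ℝ _ ⟨?_, ?_⟩
    · rw [Finset.coe_insert]; exact Set.mem_insert _ _
    · rw [Finset.coe_singleton]; exact Set.mem_singleton _
  have hvv : convexHull ℝ (({v} : Finset _) : Set ((Fin n → ℝ) × (Fin d → ℝ)))
        ∩ convexHull ℝ (({v} : Finset _) : Set ((Fin n → ℝ) × (Fin d → ℝ)))
        ⊆ convexHull ℝ ((({v} : Finset _) : Set ((Fin n → ℝ) × (Fin d → ℝ)))
          ∩ (({v} : Finset _) : Set _)) := by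
    intro x hx
    have hxv := (hsingleton x).1 hx.2
    subst hxv
    refine subset_convexHull ℝ _ ⟨?_, ?_⟩ <;>
      · rw [Finset.coe_singleton]; exact Set.mem_singleton _
  have hsubPP₁ : ExtAux.convSet n d A₁ Finset.univ
      ⊆ ExtAux.convSet n d Finset.univ Finset.univ :=
    fun x hx => ExtAux.mem_convSet_of_Q (hQmono (ExtAux.Q_of_mem_convSet hx))
  have hsubPP₂ : ExtAux.convSet n d Finset.univ B₂
      ⊆ ExtAux.convSet n d Finset.univ Finset.univ :=
    fun x hx => ExtAux.mem_convSet_of_Q (hQmono (ExtAux.Q_of_mem_convSet hx))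
  have hvP : v ∈ ExtAux.convSet n d (Finset.univ : Finset (Fin n))
      (Finset.univ : Finset (Fin d)) :=
    subset_convexHull ℝ _ ⟨i₀, a₀, Finset.mem_univ _, Finset.mem_univ _, hvdef⟩
  have hconvBaseP : ∀ s ∈ Base, convexHull ℝ (s : Set ((Fin n → ℝ) × (Fin d → ℝ)))
      ⊆ ExtAux.convSet n d Finset.univ Finset.univ := by
    rintro s (hs | hs)
    · exact (hconv₁ s hs).trans hsubPP₁
    · exact (hconv₂ s hs).trans hsubPP₂
  -- the simplicial complex
  have hFne : ∅ ∉ Faces := by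
    -- not_empty_mem
    intro h
    rcases (hmemF ∅).1 h with (hb | hb) | ⟨s', -, he⟩ | he
    · exact T₁.empty_notMem hb
    · exact T₂.empty_notMem hb
    · exact Finset.insert_ne_empty _ _ he.symm
    · exact Finset.singleton_ne_empty _ he.symm
  have hFdc : ∀ s t, s ∈ Faces → t ⊆ s → t ≠ ∅ → t ∈ Faces := by
    -- down_closed
    intro s t hs hts htne
    rcases (hmemF s).1 hs with hb | ⟨s', hs', rfl⟩ | rfl
    · exact (hmemF t).2 (Or.inl (hdownBase s hb t hts htne))
    · by_cases hvt : v ∈ t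
      · by_cases h0 : t.erase v = ∅
        · have ht1 : t = {v} := by
            rcases (Finset.erase_eq_empty_iff t v).1 h0 with h | h
            · exact absurd h htne
            · exact h
          exact (hmemF t).2 (Or.inr (Or.inr ht1))
        · have hsub : t.erase v ⊆ s' := by
            intro p hp
            obtain ⟨hpv, hpt⟩ := Finset.mem_erase.1 hp
            rcases Finset.mem_insert.1 (hts hpt) with h | h
            · exact absurd h hpv
            · exact h
          exact (hmemF t).2 (Or.inr (Or.inl ⟨t.erase v, hdownBase s' hs' _ hsub h0,
            (Finset.insert_erase hvt).symm⟩))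
      · have hsub : t ⊆ s' := by
          intro p hp
          rcases Finset.mem_insert.1 (hts hp) with h | h
          · exact absurd (h ▸ hp) hvt
          · exact h
        exact (hmemF t).2 (Or.inl (hdownBase s' hs' t hsub htne))
    · rcases Finset.subset_singleton_iff.1 hts with rfl | rfl
      · exact absurd rfl htne
      · exact (hmemF _).2 (Or.inr (Or.inr rfl))
  refine ⟨⟨⟨Faces, ?_⟩, ?_, ?_⟩, ⟨?_, ?_⟩, ?_, ?_⟩
  · intro s hs
    exact ⟨Finset.nonempty_iff_ne_empty.2 (fun h => hFne (h ▸ hs)),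
      fun t hts htne => hFdc s t hs hts (Finset.nonempty_iff_ne_empty.1 htne)⟩
  · -- indep
    intro s hs
    rcases (hmemF s).1 hs with hb | ⟨s', hs', rfl⟩ | rfl
    · exact hindepBase s hb
    · exact ExtAux2.affineIndependent_insert (hindepBase s' hs') (haffv s' hs')
    · haveI : Subsingleton {x // x ∈ ({v} : Finset ((Fin n → ℝ) × (Fin d → ℝ)))} :=
        ⟨fun a b => Subtype.ext
          ((Finset.mem_singleton.1 a.2).trans (Finset.mem_singleton.1 b.2).symm)⟩
      exact affineIndependent_of_subsingleton ℝ _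
  · -- inter_subset_convexHull
    intro s t hs ht
    rcases (hmemF s).1 hs with hbs | ⟨s', hs', rfl⟩ | rfl <;>
      rcases (hmemF t).1 ht with hbt | ⟨t', ht', rfl⟩ | rfl
    · exact hbase s hbs t hbt
    · exact hBC s hbs t' ht'
    · exact hBv' s hbs
    · exact hcomm _ _ (hBC t hbt s' hs')
    · exact hCC s' hs' t' ht'
    · exact hCv s' hs'
    · exact hcomm _ _ (hBv' t hbt)
    · exact hcomm _ _ (hCv t' ht')
    · exact hvv
  · -- vertices
    intro x hx
    rw [Geometry.SimplicialComplex.mem_vertices] at hx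
    rcases (hmemF {x}).1 hx with (hb | hb) | ⟨s', -, he⟩ | he
    · exact hvert₁ x (Geometry.SimplicialComplex.mem_vertices.2 hb)
    · exact hvert₂ x (Geometry.SimplicialComplex.mem_vertices.2 hb)
    · have : v ∈ ({x} : Finset ((Fin n → ℝ) × (Fin d → ℝ))) := by
        rw [he]; exact Finset.mem_insert_self _ _
      exact ⟨i₀, a₀, ((Finset.mem_singleton.1 this).symm.trans hvdef)⟩
    · exact ⟨i₀, a₀, (Finset.singleton_injective he).trans hvdef⟩
  · -- space
    rw [hPfull]
    apply subset_antisymm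
    · intro x hx
      rw [Geometry.SimplicialComplex.mem_space_iff] at hx
      obtain ⟨s, hsF, hxs⟩ := hx
      rcases (hmemF s).1 hsF with hb | ⟨s', hs', rfl⟩ | rfl
      · exact hconvBaseP s hb hxs
      · refine convexHull_min ?_ (convex_convexHull ℝ _) hxs
        rw [Finset.coe_insert]
        exact Set.insert_subset hvP
          ((subset_convexHull ℝ _).trans (hconvBaseP s' hs'))
      · rw [hsingleton x] at hxs
        rw [hxs]
        exact hvP
    · intro x hx
      obtain ⟨h1, h2, h3, h4, -, -⟩ := ExtAux.Q_of_mem_convSet hx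
      rw [Geometry.SimplicialComplex.mem_space_iff]
      set c := min (x.1 i₀) (x.2 a₀) with hcdef
      have hc0 : 0 ≤ c := le_min (h1 i₀) (h2 a₀)
      have hle1 : x.1 i₀ ≤ 1 := by
        rw [← h3]
        exact Finset.single_le_sum (fun i _ => h1 i) (Finset.mem_univ i₀)
      have hle2 : x.2 a₀ ≤ 1 := by
        rw [← h4]
        exact Finset.single_le_sum (fun a _ => h2 a) (Finset.mem_univ a₀)
      have hc1 : c ≤ 1 := le_trans (min_le_left _ _) hle1
      have hsingle1 : ∑ j, (Pi.single i₀ 1 : Fin n → ℝ) j = 1 := by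
        simp [Pi.single_apply]
      have hsingle2 : ∑ b, (Pi.single a₀ 1 : Fin d → ℝ) b = 1 := by
        simp [Pi.single_apply]
      rcases eq_or_lt_of_le hc1 with hceq | hclt
      · -- x = v
        have h1i : x.1 i₀ = 1 := le_antisymm hle1 (hceq ▸ min_le_left _ _)
        have h2a : x.2 a₀ = 1 := le_antisymm hle2 (hceq ▸ min_le_right _ _)
        have hrest1 : ∑ i ∈ Finset.univ.erase i₀, x.1 i = 0 := by
          have hh := Finset.add_sum_erase Finset.univ x.1 (Finset.mem_univ i₀)
          rw [h3, h1i] at hh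
          linarith
        have hrest2 : ∑ a ∈ Finset.univ.erase a₀, x.2 a = 0 := by
          have hh := Finset.add_sum_erase Finset.univ x.2 (Finset.mem_univ a₀)
          rw [h4, h2a] at hh
          linarith
        have hx1 : x.1 = Pi.single i₀ 1 := by
          funext j
          by_cases hj : j = i₀
          · rw [hj, h1i]; simp
          · have hj0 : x.1 j = 0 :=
              (Finset.sum_eq_zero_iff_of_nonneg (fun i _ => h1 i)).1 hrest1 j
                (Finset.mem_erase.2 ⟨hj, Finset.mem_univ _⟩)
            rw [hj0]
            simp [Pi.single_apply, hj]
        have hx2 : x.2 = Pi.single a₀ 1 := by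
          funext b
          by_cases hb : b = a₀
          · rw [hb, h2a]; simp
          · have hb0 : x.2 b = 0 :=
              (Finset.sum_eq_zero_iff_of_nonneg (fun a _ => h2 a)).1 hrest2 b
                (Finset.mem_erase.2 ⟨hb, Finset.mem_univ _⟩)
            rw [hb0]
            simp [Pi.single_apply, hb]
        have hxv : x = v := by
          rw [hvdef]
          exact Prod.ext_iff.2 ⟨hx1, hx2⟩
        exact ⟨{v}, (hmemF _).2 (Or.inr (Or.inr rfl)), by
          rw [hxv]
          exact subset_convexHull ℝ _ (by rw [Finset.coe_singleton]; exact rfl)⟩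
      · -- pull towards v
        have hcne : (1 : ℝ) - c ≠ 0 := by linarith
        have hcpos : (0 : ℝ) < 1 - c := by linarith
        set y := (1 - c)⁻¹ • (x - c • v) with hydef
        have hy1 : ∀ j, y.1 j = (1 - c)⁻¹ * (x.1 j - c * (Pi.single i₀ 1 : Fin n → ℝ) j) :=
          fun j => rfl
        have hy2 : ∀ b, y.2 b = (1 - c)⁻¹ * (x.2 b - c * (Pi.single a₀ 1 : Fin d → ℝ) b) :=
          fun b => rfl
        have hy1nn : ∀ j, 0 ≤ y.1 j := by
          intro j
          rw [hy1 j]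
          have hinv : (0:ℝ) ≤ (1 - c)⁻¹ := inv_nonneg.2 (le_of_lt hcpos)
          by_cases hj : j = i₀
          · rw [hj]
            have hcx : c ≤ x.1 i₀ := min_le_left _ _
            have h5 : (Pi.single i₀ (1:ℝ) : Fin n → ℝ) i₀ = 1 := by simp
            rw [h5]
            exact mul_nonneg hinv (by linarith)
          · have h5 : (Pi.single i₀ (1:ℝ) : Fin n → ℝ) j = 0 := by
              simp [Pi.single_apply, hj]
            rw [h5]
            exact mul_nonneg hinv (by simpa using h1 j)
        have hy2nn : ∀ b, 0 ≤ y.2 b := by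
          intro b
          rw [hy2 b]
          have hinv : (0:ℝ) ≤ (1 - c)⁻¹ := inv_nonneg.2 (le_of_lt hcpos)
          by_cases hb : b = a₀
          · rw [hb]
            have hcx : c ≤ x.2 a₀ := min_le_right _ _
            have h5 : (Pi.single a₀ (1:ℝ) : Fin d → ℝ) a₀ = 1 := by simp
            rw [h5]
            exact mul_nonneg hinv (by linarith)
          · have h5 : (Pi.single a₀ (1:ℝ) : Fin d → ℝ) b = 0 := by
              simp [Pi.single_apply, hb]
            rw [h5]
            exact mul_nonneg hinv (by simpa using h2 b)
        have hysum1 : ∑ j, y.1 j = 1 := by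
          simp_rw [hy1]
          rw [← Finset.mul_sum]
          rw [Finset.sum_sub_distrib, h3, ← Finset.mul_sum, hsingle1]
          field_simp
        have hysum2 : ∑ b, y.2 b = 1 := by
          simp_rw [hy2]
          rw [← Finset.mul_sum]
          rw [Finset.sum_sub_distrib, h4, ← Finset.mul_sum, hsingle2]
          field_simp
        have hxrep : x = c • v + (1 - c) • y := by
          rw [hydef, smul_inv_smul₀ hcne]
          abel
        rcases min_cases (x.1 i₀) (x.2 a₀) with ⟨hmin, -⟩ | ⟨hmin, -⟩
        · -- lands in P₁
          have hyi₀ : y.1 i₀ = 0 := by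
            rw [hy1 i₀]
            have h5 : (Pi.single i₀ (1:ℝ) : Fin n → ℝ) i₀ = 1 := by simp
            rw [h5, hcdef.trans hmin]
            ring
          have hyQ : ExtAux.Q A₁ Finset.univ y := by
            refine ⟨hy1nn, hy2nn, hysum1, hysum2, fun i hi => ?_,
              fun a ha => absurd (Finset.mem_univ a) ha⟩
            have : i = i₀ := by
              by_contra hne
              exact hi (Finset.mem_erase.2 ⟨hne, Finset.mem_univ _⟩)
            rwa [this]
          have hyP₁ : y ∈ T₁.space := by
            rw [hsp₁]
            exact ExtAux.mem_convSet_of_Q hyQ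
          rw [Geometry.SimplicialComplex.mem_space_iff] at hyP₁
          obtain ⟨s, hsT, hys⟩ := hyP₁
          refine ⟨insert v s, (hmemF _).2 (Or.inr (Or.inl ⟨s, Or.inl hsT, rfl⟩)), ?_⟩
          rw [hxrep]
          have := ExtAux2.cone_mem (v := v) hc0 hc1 hys
          rwa [Finset.coe_insert]
        · -- lands in P₂
          have hya₀ : y.2 a₀ = 0 := by
            rw [hy2 a₀]
            have h5 : (Pi.single a₀ (1:ℝ) : Fin d → ℝ) a₀ = 1 := by simp
            rw [h5, hcdef.trans hmin]
            ring
          have hyQ : ExtAux.Q Finset.univ B₂ y := by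
            refine ⟨hy1nn, hy2nn, hysum1, hysum2,
              fun i hi => absurd (Finset.mem_univ i) hi, fun a ha => ?_⟩
            have : a = a₀ := by
              by_contra hne
              exact ha (Finset.mem_erase.2 ⟨hne, Finset.mem_univ _⟩)
            rwa [this]
          have hyP₂ : y ∈ T₂.space := by
            rw [hsp₂]
            exact ExtAux.mem_convSet_of_Q hyQ
          rw [Geometry.SimplicialComplex.mem_space_iff] at hyP₂
          obtain ⟨s, hsT, hys⟩ := hyP₂
          refine ⟨insert v s, (hmemF _).2 (Or.inr (Or.inl ⟨s, Or.inr hsT, rfl⟩)), ?_⟩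
          rw [hxrep]
          have := ExtAux2.cone_mem (v := v) hc0 hc1 hys
          rwa [Finset.coe_insert]
  · -- T₁.faces ⊆ T.faces
    intro s hs
    exact (hmemF s).2 (Or.inl (Or.inl hs))
  · -- T₂.faces ⊆ T.faces
    intro s hs
    exact (hmemF s).2 (Or.inl (Or.inr hs))
end
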